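/- arXiv:1410.0837 — 5 statements merged into one kernel-verified Lean document; each statement's English description precedes it below -/
import Mathlib

section
/- The (M+N)×(M+N) matrix M_{M,N}(z) with entries (M_{M,N}(z))_{ij} = q_j − q_j^{-1} if i < j, q_j − z a q_j^{-1} if i = j, and z a (q_j − q_j^{-1}) if i > j, has inverse given by (M_{M,N}^{-1}(z))_{ij} = θ_i^{-1} θ_j / ((1−za)(1−za q^{−2M+2N})) times: q_j^{-1} − q_j if i < j; q_j^{-1} − z a q^{−2M+2N} q_j if i = j; (q_j^{-1} − q_j) z a q^{−2M+2N} if i > j; where θ_1 = 1 and θ_{i+1} = q_{i+1}^{-1} q_i^{-1} θ_i. -/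
/-- `d_i` (0-based index: `i` corresponds to the paper's `i+1`). -/
def PSd (M : ℕ) (i : ℕ) : ℤ := if i < M then 1 else -1

/-- `q_i = q^{d_i}` (0-based). -/
noncomputable def PSq (q : ℂ) (M : ℕ) (i : ℕ) : ℂ := q ^ (PSd M i)

/-- `θ_1 = 1`, `θ_{i+1} = q_{i+1}⁻¹ q_i⁻¹ θ_i` (0-based: `PStheta q M i = θ_{i+1}`). -/
noncomputable def PStheta (q : ℂ) (M : ℕ) : ℕ → ℂ
  | 0 => 1
  | n + 1 => (PSq q M (n + 1))⁻¹ * (PSq q M n)⁻¹ * PStheta q M n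

noncomputable def PSt (q : ℂ) (M : ℕ) (n : ℕ) : ℂ := (PStheta q M n)⁻¹ * (PSq q M n)⁻¹

lemma PSq_ne_zero {q : ℂ} (hq : q ≠ 0) (M i : ℕ) : PSq q M i ≠ 0 := zpow_ne_zero _ hq

lemma PStheta_ne_zero {q : ℂ} (hq : q ≠ 0) (M : ℕ) : ∀ n, PStheta q M n ≠ 0
  | 0 => one_ne_zero
  | (n+1) => mul_ne_zero (mul_ne_zero (inv_ne_zero (PSq_ne_zero hq M _))
      (inv_ne_zero (PSq_ne_zero hq M _))) (PStheta_ne_zero hq M n)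

lemma PSt_succ {q : ℂ} (hq : q ≠ 0) (M n : ℕ) :
    PSt q M (n+1) = (PStheta q M n)⁻¹ * PSq q M n := by
  have h1 := PSq_ne_zero hq M n
  have h2 := PSq_ne_zero hq M (n+1)
  have h3 := PStheta_ne_zero hq M n
  simp only [PSt, PStheta]
  field_simp

lemma PS_telescope {q : ℂ} (hq : q ≠ 0) (M m n : ℕ) (h : m ≤ n) :
    ∑ k ∈ Finset.Ico m n, (PStheta q M k)⁻¹ * (PSq q M k - (PSq q M k)⁻¹)
      = PSt q M n - PSt q M m := by
  have hterm : ∀ k, (PStheta q M k)⁻¹ * (PSq q M k - (PSq q M k)⁻¹)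
      = PSt q M (k+1) - PSt q M k := by
    intro k; rw [PSt_succ hq]; simp only [PSt]; ring
  simp_rw [hterm]
  rw [Finset.sum_Ico_eq_sub _ h, Finset.sum_range_sub (PSt q M), Finset.sum_range_sub (PSt q M)]
  ring

lemma PSd_sum (M N : ℕ) : ∑ k ∈ Finset.range (M + N), PSd M k = (M : ℤ) - N := by
  rw [Finset.range_eq_Ico, ← Finset.sum_Ico_consecutive _ (Nat.zero_le M) (Nat.le_add_right M N)]
  have e1 : ∑ k ∈ Finset.Ico 0 M, PSd M k = (M : ℤ) := by
    have h : ∀ k ∈ Finset.Ico 0 M, PSd M k = 1 := by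
      intro k hk; exact if_pos (Finset.mem_Ico.mp hk).2
    rw [Finset.sum_congr rfl h]
    simp
  have e2 : ∑ k ∈ Finset.Ico M (M+N), PSd M k = -(N : ℤ) := by
    have h : ∀ k ∈ Finset.Ico M (M+N), PSd M k = -1 := by
      intro k hk; exact if_neg (not_lt.mpr (Finset.mem_Ico.mp hk).1)
    rw [Finset.sum_congr rfl h]
    simp
  rw [e1, e2]; ring

lemma PSt_formula {q : ℂ} (hq : q ≠ 0) (M : ℕ) (n : ℕ) :
    PSt q M n = q ^ (2 * ∑ k ∈ Finset.range n, PSd M k - PSd M 0) := by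
  induction n with
  | zero => simp [PSt, PStheta, PSq, zpow_neg]
  | succ n ih =>
    have hqn := PSq_ne_zero hq M n
    have hth := PStheta_ne_zero hq M n
    have h : PSt q M (n+1) = PSt q M n * (PSq q M n * PSq q M n) := by
      rw [PSt_succ hq]; simp only [PSt]; field_simp
    rw [h, ih]
    simp only [PSq]
    rw [← zpow_add₀ hq, ← zpow_add₀ hq, Finset.sum_range_succ]
    congr 1
    ring
set_option maxHeartbeats 2000000 in
/-- explicit inverse of the matrix `𝓜_{M,N}(z)`. -/
theorem matrix_MMN_inverse (M N : ℕ) (hM : 0 < M) (hN : 0 < N) (q a z : ℂ) (hq : q ≠ 0)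
    (hroot : ∀ n : ℕ, 0 < n → q ^ n ≠ 1) (ha : a ≠ 0)
    (h1 : 1 - z * a ≠ 0) (h2 : 1 - z * a * q ^ (2 * (N : ℤ) - 2 * M) ≠ 0)
    (Mmat Minv : Matrix (Fin (M + N)) (Fin (M + N)) ℂ)
    (hMmat : ∀ i j : Fin (M + N), Mmat i j =
      if (i : ℕ) < j then PSq q M j - (PSq q M j)⁻¹
      else if (i : ℕ) = j then PSq q M j - z * a * (PSq q M j)⁻¹
      else z * a * (PSq q M j - (PSq q M j)⁻¹))
    (hMinv : ∀ i j : Fin (M + N), Minv i j =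
      (PStheta q M i)⁻¹ * PStheta q M j /
        ((1 - z * a) * (1 - z * a * q ^ (2 * (N : ℤ) - 2 * M))) *
      (if (i : ℕ) < j then (PSq q M j)⁻¹ - PSq q M j
       else if (i : ℕ) = j then
         (PSq q M j)⁻¹ - z * a * q ^ (2 * (N : ℤ) - 2 * M) * PSq q M j
       else ((PSq q M j)⁻¹ - PSq q M j) * (z * a * q ^ (2 * (N : ℤ) - 2 * M)))) :
    Mmat * Minv = 1 ∧ Minv * Mmat = 1 := by
  have hqM : ∀ i, PSq q M i ≠ 0 := fun i => PSq_ne_zero hq M i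
  have hth : ∀ n, PStheta q M n ≠ 0 := PStheta_ne_zero hq M
  have hPne : q ^ (2 * (N : ℤ) - 2 * M) ≠ 0 := zpow_ne_zero _ hq
  suffices hmain : Mmat * Minv = 1 from ⟨hmain, mul_eq_one_comm.mp hmain⟩
  ext i j
  rw [Matrix.mul_apply, Matrix.one_apply]
  set F : ℕ → ℂ := fun k =>
    (if (i : ℕ) < k then PSq q M k - (PSq q M k)⁻¹
     else if (i : ℕ) = k then PSq q M k - z * a * (PSq q M k)⁻¹
     else z * a * (PSq q M k - (PSq q M k)⁻¹)) *
    ((PStheta q M k)⁻¹ * PStheta q M (j : ℕ) /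
        ((1 - z * a) * (1 - z * a * q ^ (2 * (N : ℤ) - 2 * M))) *
     (if k < (j : ℕ) then (PSq q M (j : ℕ))⁻¹ - PSq q M (j : ℕ)
      else if k = (j : ℕ) then
        (PSq q M (j : ℕ))⁻¹ - z * a * q ^ (2 * (N : ℤ) - 2 * M) * PSq q M (j : ℕ)
      else ((PSq q M (j : ℕ))⁻¹ - PSq q M (j : ℕ)) * (z * a * q ^ (2 * (N : ℤ) - 2 * M))))
    with hF
  have hsum : ∑ k : Fin (M + N), Mmat i k * Minv k j = ∑ k ∈ Finset.range (M + N), F k := by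
    rw [← Fin.sum_univ_eq_sum_range F (M + N)]
    refine Finset.sum_congr rfl fun k _ => ?_
    rw [hMmat, hMinv, hF]
  rw [hsum]
  have key : ∀ (C : ℂ) (m n : ℕ), m ≤ n →
      (∀ k, m ≤ k → k < n → F k = C * ((PStheta q M k)⁻¹ * (PSq q M k - (PSq q M k)⁻¹))) →
      ∑ k ∈ Finset.Ico m n, F k = C * (PSt q M n - PSt q M m) := by
    intro C m n hmn hFk
    have h : ∀ k ∈ Finset.Ico m n,
        F k = C * ((PStheta q M k)⁻¹ * (PSq q M k - (PSq q M k)⁻¹)) := fun k hk =>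
      hFk k (Finset.mem_Ico.mp hk).1 (Finset.mem_Ico.mp hk).2
    rw [Finset.sum_congr rfl h, ← Finset.mul_sum, PS_telescope hq M m n hmn]
  have hiT : (i : ℕ) < M + N := i.isLt
  have hjT : (j : ℕ) < M + N := j.isLt
  have h0 : PSt q M 0 = q⁻¹ := by
    simp [PSt, PStheta, PSq, PSd, hM]
  have hT : PSt q M (M + N) = (q ^ (2 * (N : ℤ) - 2 * M))⁻¹ * q⁻¹ := by
    rw [PSt_formula hq M (M + N), PSd_sum M N, show PSd M 0 = 1 from if_pos hM,
        show 2 * ((M : ℤ) - N) - 1 = -(2 * (N : ℤ) - 2 * M) + -1 by ring,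
        zpow_add₀ hq, zpow_neg, zpow_neg_one]
  rcases lt_trichotomy (i : ℕ) (j : ℕ) with hij | hij | hij
  · -- i < j : entry is 0
    rw [if_neg (by rw [Fin.ext_iff]; omega)]
    rw [Finset.range_eq_Ico,
        ← Finset.sum_Ico_consecutive F (Nat.zero_le (i : ℕ)) (by omega : (i : ℕ) ≤ M + N),
        Finset.sum_eq_sum_Ico_succ_bot (by omega : (i : ℕ) < M + N) F,
        ← Finset.sum_Ico_consecutive F (by omega : (i : ℕ) + 1 ≤ (j : ℕ))
          (by omega : (j : ℕ) ≤ M + N),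
        Finset.sum_eq_sum_Ico_succ_bot (by omega : (j : ℕ) < M + N) F]
    have e1 := key (z * a * (PStheta q M (j : ℕ) * ((PSq q M (j : ℕ))⁻¹ - PSq q M (j : ℕ)) /
        ((1 - z * a) * (1 - z * a * q ^ (2 * (N : ℤ) - 2 * M))))) 0 (i : ℕ) (Nat.zero_le _)
      (fun k hk1 hk2 => by
        simp only [hF]
        split_ifs <;> first | omega | ring)
    have e2 : F (i : ℕ) = (PSq q M (i : ℕ) - z * a * (PSq q M (i : ℕ))⁻¹) *
        ((PStheta q M (i : ℕ))⁻¹ * PStheta q M (j : ℕ) /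
          ((1 - z * a) * (1 - z * a * q ^ (2 * (N : ℤ) - 2 * M))) *
         ((PSq q M (j : ℕ))⁻¹ - PSq q M (j : ℕ))) := by
      simp only [hF]
      split_ifs <;> first | omega | ring
    have e3 := key (PStheta q M (j : ℕ) * ((PSq q M (j : ℕ))⁻¹ - PSq q M (j : ℕ)) /
        ((1 - z * a) * (1 - z * a * q ^ (2 * (N : ℤ) - 2 * M)))) ((i : ℕ) + 1) (j : ℕ)
      (by omega)
      (fun k hk1 hk2 => by
        simp only [hF]
        split_ifs <;> first | omega | ring)
    have e4 : F (j : ℕ) = (PSq q M (j : ℕ) - (PSq q M (j : ℕ))⁻¹) *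
        ((PStheta q M (j : ℕ))⁻¹ * PStheta q M (j : ℕ) /
          ((1 - z * a) * (1 - z * a * q ^ (2 * (N : ℤ) - 2 * M))) *
         ((PSq q M (j : ℕ))⁻¹ - z * a * q ^ (2 * (N : ℤ) - 2 * M) * PSq q M (j : ℕ))) := by
      simp only [hF]
      split_ifs <;> first | omega | ring
    have e5 := key (PStheta q M (j : ℕ) * (((PSq q M (j : ℕ))⁻¹ - PSq q M (j : ℕ)) *
        (z * a * q ^ (2 * (N : ℤ) - 2 * M))) /
        ((1 - z * a) * (1 - z * a * q ^ (2 * (N : ℤ) - 2 * M)))) ((j : ℕ) + 1) (M + N)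
      (by omega)
      (fun k hk1 hk2 => by
        simp only [hF]
        split_ifs <;> first | omega | ring)
    rw [e1, e2, e3, e4, e5, h0, hT, PSt_succ hq M (i : ℕ), PSt_succ hq M (j : ℕ)]
    simp only [PSt]
    linear_combination (((1 - z * a) * (1 - z * a * q ^ (2 * (N : ℤ) - 2 * M)))⁻¹ *
      (z * a * PStheta q M (j : ℕ) * ((PSq q M (j : ℕ))⁻¹ - PSq q M (j : ℕ)) * q⁻¹)) *
      (mul_inv_cancel₀ hPne)
  · -- i = j : entry is 1
    rw [if_pos (by rw [Fin.ext_iff]; omega)]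
    rw [Finset.range_eq_Ico,
        ← Finset.sum_Ico_consecutive F (Nat.zero_le (i : ℕ)) (by omega : (i : ℕ) ≤ M + N),
        Finset.sum_eq_sum_Ico_succ_bot (by omega : (i : ℕ) < M + N) F]
    have e1 := key (z * a * (PStheta q M (j : ℕ) * ((PSq q M (j : ℕ))⁻¹ - PSq q M (j : ℕ)) /
        ((1 - z * a) * (1 - z * a * q ^ (2 * (N : ℤ) - 2 * M))))) 0 (i : ℕ) (Nat.zero_le _)
      (fun k hk1 hk2 => by
        simp only [hF]
        split_ifs <;> first | omega | ring)
    have e2 : F (i : ℕ) = (PSq q M (i : ℕ) - z * a * (PSq q M (i : ℕ))⁻¹) *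
        ((PStheta q M (i : ℕ))⁻¹ * PStheta q M (j : ℕ) /
          ((1 - z * a) * (1 - z * a * q ^ (2 * (N : ℤ) - 2 * M))) *
         ((PSq q M (j : ℕ))⁻¹ - z * a * q ^ (2 * (N : ℤ) - 2 * M) * PSq q M (j : ℕ))) := by
      simp only [hF]
      split_ifs <;> first | omega | ring
    have e5 := key (PStheta q M (j : ℕ) * (((PSq q M (j : ℕ))⁻¹ - PSq q M (j : ℕ)) *
        (z * a * q ^ (2 * (N : ℤ) - 2 * M))) /
        ((1 - z * a) * (1 - z * a * q ^ (2 * (N : ℤ) - 2 * M)))) ((i : ℕ) + 1) (M + N)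
      (by omega)
      (fun k hk1 hk2 => by
        simp only [hF]
        split_ifs <;> first | omega | ring)
    have hqij : PSq q M (i : ℕ) = PSq q M (j : ℕ) := by rw [hij]
    have hthij : PStheta q M (i : ℕ) = PStheta q M (j : ℕ) := by rw [hij]
    rw [e1, e2, e5, h0, hT, PSt_succ hq M (i : ℕ), hqij, hthij]
    simp only [PSt]
    rw [hij]
    linear_combination
      (PStheta q M (j : ℕ) * (PStheta q M (j : ℕ))⁻¹ * PSq q M (j : ℕ) * (PSq q M (j : ℕ))⁻¹) *
        (mul_inv_cancel₀ (mul_ne_zero h1 h2))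
      + (PSq q M (j : ℕ) * (PSq q M (j : ℕ))⁻¹) * (mul_inv_cancel₀ (hth (j : ℕ)))
      + (mul_inv_cancel₀ (hqM (j : ℕ)))
      + (((1 - z * a) * (1 - z * a * q ^ (2 * (N : ℤ) - 2 * M)))⁻¹ *
          (z * a * PStheta q M (j : ℕ) * q⁻¹ * ((PSq q M (j : ℕ))⁻¹ - PSq q M (j : ℕ)))) *
        (mul_inv_cancel₀ hPne)
  · -- i > j : entry is 0
    rw [if_neg (by rw [Fin.ext_iff]; omega)]
    rw [Finset.range_eq_Ico,
        ← Finset.sum_Ico_consecutive F (Nat.zero_le (j : ℕ)) (by omega : (j : ℕ) ≤ M + N),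
        Finset.sum_eq_sum_Ico_succ_bot (by omega : (j : ℕ) < M + N) F,
        ← Finset.sum_Ico_consecutive F (by omega : (j : ℕ) + 1 ≤ (i : ℕ))
          (by omega : (i : ℕ) ≤ M + N),
        Finset.sum_eq_sum_Ico_succ_bot (by omega : (i : ℕ) < M + N) F]
    have e1 := key (z * a * (PStheta q M (j : ℕ) * ((PSq q M (j : ℕ))⁻¹ - PSq q M (j : ℕ)) /
        ((1 - z * a) * (1 - z * a * q ^ (2 * (N : ℤ) - 2 * M))))) 0 (j : ℕ) (Nat.zero_le _)
      (fun k hk1 hk2 => by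
        simp only [hF]
        split_ifs <;> first | omega | ring)
    have e2 : F (j : ℕ) = z * a * (PSq q M (j : ℕ) - (PSq q M (j : ℕ))⁻¹) *
        ((PStheta q M (j : ℕ))⁻¹ * PStheta q M (j : ℕ) /
          ((1 - z * a) * (1 - z * a * q ^ (2 * (N : ℤ) - 2 * M))) *
         ((PSq q M (j : ℕ))⁻¹ - z * a * q ^ (2 * (N : ℤ) - 2 * M) * PSq q M (j : ℕ))) := by
      simp only [hF]
      split_ifs <;> first | omega | ring
    have e3 := key (z * a * (PStheta q M (j : ℕ) * (((PSq q M (j : ℕ))⁻¹ - PSq q M (j : ℕ)) *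
        (z * a * q ^ (2 * (N : ℤ) - 2 * M))) /
        ((1 - z * a) * (1 - z * a * q ^ (2 * (N : ℤ) - 2 * M))))) ((j : ℕ) + 1) (i : ℕ)
      (by omega)
      (fun k hk1 hk2 => by
        simp only [hF]
        split_ifs <;> first | omega | ring)
    have e4 : F (i : ℕ) = (PSq q M (i : ℕ) - z * a * (PSq q M (i : ℕ))⁻¹) *
        ((PStheta q M (i : ℕ))⁻¹ * PStheta q M (j : ℕ) /
          ((1 - z * a) * (1 - z * a * q ^ (2 * (N : ℤ) - 2 * M))) *
         (((PSq q M (j : ℕ))⁻¹ - PSq q M (j : ℕ)) * (z * a * q ^ (2 * (N : ℤ) - 2 * M)))) := by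
      simp only [hF]
      split_ifs <;> first | omega | ring
    have e5 := key (PStheta q M (j : ℕ) * (((PSq q M (j : ℕ))⁻¹ - PSq q M (j : ℕ)) *
        (z * a * q ^ (2 * (N : ℤ) - 2 * M))) /
        ((1 - z * a) * (1 - z * a * q ^ (2 * (N : ℤ) - 2 * M)))) ((i : ℕ) + 1) (M + N)
      (by omega)
      (fun k hk1 hk2 => by
        simp only [hF]
        split_ifs <;> first | omega | ring)
    rw [e1, e2, e3, e4, e5, h0, hT, PSt_succ hq M (i : ℕ), PSt_succ hq M (j : ℕ)]
    simp only [PSt]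
    linear_combination (((1 - z * a) * (1 - z * a * q ^ (2 * (N : ℤ) - 2 * M)))⁻¹ *
      (z * a * PStheta q M (j : ℕ) * ((PSq q M (j : ℕ))⁻¹ - PSq q M (j : ℕ)) * q⁻¹)) *
      (mul_inv_cancel₀ hPne)
end

section
/- For any (M,N)-hook partition λ, the map GT_λ sending a gl(M,N)-Young tableau f of shape Y^λ to the sequence (Ym^{-1}_{M_k,N_k}(f^{-1}(I_{M_k,N_k})))_{k=1,...,M+N} is a bijection from the set of gl(M,N)-Young tableaux of shape Y^λ onto the set GT(λ) of Gelfand–Tsetlin patterns with top weight λ. -/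
def rowLen (Y : Finset (ℕ × ℕ)) (i : ℕ) : ℕ := (Y.filter (fun p => p.1 = i)).card

def IsHook (M N : ℕ) (l : ℕ → ℕ) : Prop :=
  l 0 = 0 ∧ (∀ i, M + N < i → l i = 0) ∧
  (∀ i, 1 ≤ i → i < M + N → i ≠ M → l (i + 1) ≤ l i) ∧
  (∀ j, 1 ≤ j → j ≤ N → 0 < l (M + j) → j ≤ l M)

def Ydiag (M N : ℕ) (l : ℕ → ℕ) : Finset (ℕ × ℕ) :=
  ((Finset.Icc 1 (M + N + (Finset.range (M + N + 1)).sup l)) ×ˢ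
    (Finset.Icc 1 (N + (Finset.range (M + N + 1)).sup l))).filter
    (fun p => (p.1 ≤ M ∧ p.2 ≤ l p.1) ∨ (M < p.1 ∧ p.2 ≤ N ∧ p.1 - M ≤ l (M + p.2)))

def IsTabOn (a b : ℕ) (Y : Finset (ℕ × ℕ)) (f : ℕ × ℕ → ℕ) : Prop :=
  (∀ p ∈ Y, 1 ≤ f p ∧ f p ≤ a + b) ∧
  (∀ p q, p ∈ Y → q ∈ Y → p.1 ≤ q.1 → p.2 ≤ q.2 → f p ≤ f q) ∧
  (∀ i j, (i, j) ∈ Y → (i + 1, j) ∈ Y → f (i, j) ≤ a → f (i, j) < f (i + 1, j)) ∧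
  (∀ i j, (i, j) ∈ Y → (i, j + 1) ∈ Y → a + 1 ≤ f (i, j) → f (i, j) < f (i, j + 1))

def inS (a b a' b' : ℕ) (lam mu : ℕ → ℕ) : Prop :=
  IsHook a' b' mu ∧ ∃ f, IsTabOn a b (Ydiag a b lam) f ∧
    Ydiag a' b' mu = (Ydiag a b lam).filter (fun p => f p ≤ a' + b')

/-- `M_k = min k M`. -/
def Mk (M k : ℕ) : ℕ := min k M
/-- `N_k = k − M` (truncated subtraction), so `M_k + N_k = k` for `k ≤ M+N`. -/
def Nk (M k : ℕ) : ℕ := k - M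

/-- Gelfand–Tsetlin patterns with top weight `lam`, as normalized sequences of
hook partitions. -/
def IsGTseq (M N : ℕ) (lam : ℕ → ℕ) (L : ℕ → ℕ → ℕ) : Prop :=
  L (M + N) = lam ∧
  (∀ k, 2 ≤ k → k ≤ M + N →
    inS (Mk M k) (Nk M k) (Mk M (k - 1)) (Nk M (k - 1)) (L k) (L (k - 1))) ∧
  (∀ i, L 0 i = 0) ∧ (∀ k, M + N < k → ∀ i, L k i = 0)

lemma Mk_add_Nk (M k : ℕ) : Mk M k + Nk M k = k := by unfold Mk Nk; omega

lemma Nk_eq (M k : ℕ) : Nk M k = k - Mk M k := by unfold Mk Nk; omega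

lemma Mk_top (M N : ℕ) : Mk M (M + N) = M := by unfold Mk; omega

lemma Nk_top (M N : ℕ) : Nk M (M + N) = N := by unfold Nk; omega

lemma mem_Ydiag {a b : ℕ} {l : ℕ → ℕ} {p : ℕ × ℕ} :
    p ∈ Ydiag a b l ↔ 1 ≤ p.1 ∧ 1 ≤ p.2 ∧
      ((p.1 ≤ a ∧ p.2 ≤ l p.1) ∨ (a < p.1 ∧ p.2 ≤ b ∧ p.1 - a ≤ l (a + p.2))) := by
  constructor
  · intro h
    simp only [Ydiag, Finset.mem_filter, Finset.mem_product, Finset.mem_Icc] at h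
    exact ⟨h.1.1.1, h.1.2.1, h.2⟩
  · rintro ⟨h1, h2, h3⟩
    simp only [Ydiag, Finset.mem_filter, Finset.mem_product, Finset.mem_Icc]
    refine ⟨⟨⟨h1, ?_⟩, ⟨h2, ?_⟩⟩, h3⟩
    · rcases h3 with ⟨hpa, hpl⟩ | ⟨hpa, hpb, hpl⟩
      · omega
      · have : l (a + p.2) ≤ (Finset.range (a + b + 1)).sup l :=
          Finset.le_sup (by simp only [Finset.mem_range]; omega)
        omega
    · rcases h3 with ⟨hpa, hpl⟩ | ⟨hpa, hpb, hpl⟩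
      · have : l p.1 ≤ (Finset.range (a + b + 1)).sup l :=
          Finset.le_sup (by simp only [Finset.mem_range]; omega)
        omega
      · omega

lemma hook_anti {a b : ℕ} {l : ℕ → ℕ} (h : IsHook a b l) {i j : ℕ}
    (h1 : 1 ≤ i) (hij : i ≤ j) (hj : j ≤ a + b) (hcase : a < i ∨ j ≤ a) :
    l j ≤ l i := by
  induction j with
  | zero => omega
  | succ j ih =>
    rcases Nat.lt_or_ge i (j + 1) with hlt | hge
    · have step : l (j + 1) ≤ l j := h.2.2.1 j (by omega) (by omega) (by omega)
      exact le_trans step (ih (by omega) (by omega) (by omega))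
    · have : i = j + 1 := by omega
      subst this; exact le_refl _

lemma Ydiag_downclosed {a b : ℕ} {l : ℕ → ℕ} (h : IsHook a b l) {p q : ℕ × ℕ}
    (hq : q ∈ Ydiag a b l) (h1 : 1 ≤ p.1) (h2 : 1 ≤ p.2)
    (hp1 : p.1 ≤ q.1) (hp2 : p.2 ≤ q.2) : p ∈ Ydiag a b l := by
  rw [mem_Ydiag] at hq ⊢
  obtain ⟨hq1, hq2, hq3⟩ := hq
  refine ⟨h1, h2, ?_⟩
  rcases hq3 with ⟨ha, hl⟩ | ⟨ha, hb, hl⟩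
  · left
    refine ⟨by omega, le_trans (le_trans hp2 hl) (hook_anti h h1 hp1 (by omega) (by omega))⟩
  · rcases le_or_gt p.1 a with hpa | hpa
    · left
      refine ⟨hpa, ?_⟩
      have hla : q.2 ≤ l a := h.2.2.2 q.2 (by omega) hb (by omega)
      have : l a ≤ l p.1 := hook_anti h h1 hpa (by omega) (by omega)
      omega
    · right
      refine ⟨hpa, by omega, ?_⟩
      have : l (a + q.2) ≤ l (a + p.2) := hook_anti h (by omega) (by omega) (by omega) (by omega)
      omega

lemma Ydiag_le {a b : ℕ} {l l' : ℕ → ℕ} (h : IsHook a b l)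
    (he : Ydiag a b l ⊆ Ydiag a b l') (i : ℕ) : l i ≤ l' i := by
  rcases Nat.eq_zero_or_pos (l i) with h0 | h0
  · omega
  rcases le_or_gt i a with hia | hia
  · -- use point (i, l i)
    have hi1 : 1 ≤ i := by
      by_contra hc
      have : i = 0 := by omega
      subst this; rw [h.1] at h0; omega
    have hmem : (i, l i) ∈ Ydiag a b l := by
      rw [mem_Ydiag]; exact ⟨hi1, h0, Or.inl ⟨hia, le_refl _⟩⟩
    have := he hmem
    rw [mem_Ydiag] at this
    rcases this.2.2 with ⟨_, hle⟩ | ⟨hlt, _, _⟩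
    · exact hle
    · simp at hlt; omega
  · rcases le_or_gt i (a + b) with hib | hib
    · -- column point (a + l i, i - a)
      have hmem : (a + l i, i - a) ∈ Ydiag a b l := by
        rw [mem_Ydiag]
        refine ⟨by omega, by omega, Or.inr ⟨by omega, by omega, ?_⟩⟩
        simp only
        have : a + (i - a) = i := by omega
        rw [this]; omega
      have := he hmem
      rw [mem_Ydiag] at this
      rcases this.2.2 with ⟨hle, _⟩ | ⟨_, _, hle⟩
      · simp at hle; omega
      · simp only at hle
        have hi : a + (i - a) = i := by omega
        rw [hi] at hle; omega
    · rw [h.2.1 i (by omega)] at h0; omega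

lemma Ydiag_ext {a b : ℕ} {l l' : ℕ → ℕ} (h : IsHook a b l) (h' : IsHook a b l')
    (he : Ydiag a b l = Ydiag a b l') : l = l' := by
  funext i
  exact le_antisymm (Ydiag_le h (le_of_eq he) i) (Ydiag_le h' (ge_of_eq he) i)

lemma downset_eq_Icc {S : Finset ℕ} (h1 : ∀ x ∈ S, 1 ≤ x)
    (h2 : ∀ x ∈ S, ∀ y, 1 ≤ y → y ≤ x → y ∈ S) : S = Finset.Icc 1 S.card := by
  have hsub : S ⊆ Finset.Icc 1 S.card := by
    intro x hx
    simp only [Finset.mem_Icc]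
    refine ⟨h1 x hx, ?_⟩
    have hI : Finset.Icc 1 x ⊆ S := fun y hy =>
      h2 x hx y (Finset.mem_Icc.mp hy).1 (Finset.mem_Icc.mp hy).2
    have := Finset.card_le_card hI
    simpa using this
  exact Finset.eq_of_subset_of_card_le hsub (by simp)
lemma tab_col_lb {M N : ℕ} {lam : ℕ → ℕ} (hlam : IsHook M N lam)
    {f : ℕ × ℕ → ℕ} (hf : IsTabOn M N (Ydiag M N lam) f) :
    ∀ i j, (i, j) ∈ Ydiag M N lam → i ≤ f (i, j) ∨ M + 1 ≤ f (i, j) := by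
  intro i
  induction i with
  | zero => intro j hj; left; omega
  | succ i ih =>
    intro j hj
    rcases Nat.eq_zero_or_pos i with h0 | h0
    · subst h0
      have := (hf.1 _ hj).1
      left; omega
    · have hji : 1 ≤ j := (mem_Ydiag.mp hj).2.1
      have hmem : (i, j) ∈ Ydiag M N lam :=
        Ydiag_downclosed hlam hj (by omega) (by simpa using hji) (by simp) (le_refl _)
      rcases ih j hmem with hc | hc
      · rcases le_or_gt (f (i, j)) M with hM' | hM'
        · have := hf.2.2.1 i j hmem hj hM'
          left; omega
        · have := hf.2.1 (i, j) (i + 1, j) hmem hj (by simp) (le_refl _)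
          right; omega
      · have := hf.2.1 (i, j) (i + 1, j) hmem hj (by simp) (le_refl _)
        right; omega

lemma tab_row_lb {M N : ℕ} {lam : ℕ → ℕ} (hlam : IsHook M N lam)
    {f : ℕ × ℕ → ℕ} (hf : IsTabOn M N (Ydiag M N lam) f) :
    ∀ j i, (i, j) ∈ Ydiag M N lam → M < i → M + j ≤ f (i, j) := by
  intro j
  induction j with
  | zero => intro i hi; exact absurd (mem_Ydiag.mp hi).2.1 (by omega)
  | succ j ih =>
    intro i hi hMi
    rcases Nat.eq_zero_or_pos j with h0 | h0
    · subst h0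
      rcases tab_col_lb hlam hf i (0 + 1) hi with hc | hc
      · omega
      · omega
    · have hmem : (i, j) ∈ Ydiag M N lam :=
        Ydiag_downclosed hlam hi (by omega) (by omega) (le_refl _) (by simp)
      have h1 := ih i hmem hMi
      have := hf.2.2.2 i j hmem hi (by omega)
      omega
def restrictL (M N : ℕ) (lam : ℕ → ℕ) (f : ℕ × ℕ → ℕ) (k : ℕ) : ℕ → ℕ :=
  fun i =>
    if i = 0 then 0
    else if i ≤ Mk M k then rowLen ((Ydiag M N lam).filter (fun p => f p ≤ k)) i
    else if i ≤ k then
      (((Ydiag M N lam).filter (fun p => f p ≤ k)).filter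
        (fun p => p.2 = i - Mk M k ∧ Mk M k < p.1)).card
    else 0

lemma restrict_spec {M N : ℕ} (hM : 0 < M) {lam : ℕ → ℕ} (hlam : IsHook M N lam)
    {f : ℕ × ℕ → ℕ} (hf : IsTabOn M N (Ydiag M N lam) f) {k : ℕ} (hk1 : 1 ≤ k)
    (hk2 : k ≤ M + N) :
    IsHook (Mk M k) (Nk M k) (restrictL M N lam f k) ∧
    Ydiag (Mk M k) (Nk M k) (restrictL M N lam f k) =
      (Ydiag M N lam).filter (fun p => f p ≤ k) := by
  set Yk := (Ydiag M N lam).filter (fun p => f p ≤ k) with hYk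
  set a := Mk M k with hadef
  set b := Nk M k with hbdef
  set L := restrictL M N lam f k with hLdef
  have hab : a + b = k := Mk_add_Nk M k
  have ha1 : 1 ≤ a := by rw [hadef]; unfold Mk; omega
  have haM : a ≤ M := by rw [hadef]; unfold Mk; omega
  have hpos : ∀ p ∈ Yk, 1 ≤ p.1 ∧ 1 ≤ p.2 ∧ f p ≤ k ∧ p ∈ Ydiag M N lam := by
    intro p hp
    rw [hYk, Finset.mem_filter] at hp
    have := mem_Ydiag.mp hp.1
    exact ⟨this.1, this.2.1, hp.2, hp.1⟩
  have down : ∀ (p q : ℕ × ℕ), q ∈ Yk → 1 ≤ p.1 → 1 ≤ p.2 → p.1 ≤ q.1 → p.2 ≤ q.2 →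
      p ∈ Yk := by
    intro p q hq h1 h2 hle1 hle2
    rw [hYk, Finset.mem_filter] at hq ⊢
    have hpY : p ∈ Ydiag M N lam := Ydiag_downclosed hlam hq.1 h1 h2 hle1 hle2
    exact ⟨hpY, le_trans (hf.2.1 p q hpY hq.1 hle1 hle2) hq.2⟩
  have F3 : ∀ i j, (i, j) ∈ Yk → i ≤ a ∨ (a < i ∧ j ≤ b) := by
    intro i j hp
    obtain ⟨h1, h2, hfk, hY⟩ := hpos _ hp
    rcases le_or_gt i a with hia | hia
    · exact Or.inl hia
    · right
      refine ⟨hia, ?_⟩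
      rcases le_or_gt k M with hkM | hkM
      · -- a = k, contradiction
        have hak : a = k := by rw [hadef]; unfold Mk; omega
        rcases tab_col_lb hlam hf i j hY with hc | hc <;> omega
      · have haM' : a = M := by rw [hadef]; unfold Mk; omega
        have := tab_row_lb hlam hf j i hY (by omega)
        rw [hbdef]; unfold Nk; omega
  -- row characterization
  have rowIcc : ∀ i, 1 ≤ i →
      (Yk.filter (fun p => p.1 = i)).image Prod.snd = Finset.Icc 1 (rowLen Yk i) := by
    intro i hi
    have hmem : ∀ j, j ∈ (Yk.filter (fun p => p.1 = i)).image Prod.snd ↔ (i, j) ∈ Yk := by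
      intro j
      simp only [Finset.mem_image, Finset.mem_filter]
      constructor
      · rintro ⟨p, ⟨hp, h1⟩, h2⟩
        have : p = (i, j) := Prod.ext h1 h2
        rw [← this]; exact hp
      · intro h; exact ⟨(i, j), ⟨h, rfl⟩, rfl⟩
    have hcard : ((Yk.filter (fun p => p.1 = i)).image Prod.snd).card = rowLen Yk i := by
      unfold rowLen
      apply Finset.card_image_of_injOn
      intro p hp q hq hpq
      simp only [Finset.mem_coe, Finset.mem_filter] at hp hq
      exact Prod.ext (hp.2.trans hq.2.symm) hpq
    rw [← hcard]
    apply downset_eq_Icc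
    · intro x hx
      rw [hmem] at hx
      exact (hpos _ hx).2.1
    · intro x hx y hy1 hy2
      rw [hmem] at hx ⊢
      exact down _ _ hx (by omega) hy1 (le_refl _) hy2
  have rowChar : ∀ i j, 1 ≤ i → ((i, j) ∈ Yk ↔ 1 ≤ j ∧ j ≤ rowLen Yk i) := by
    intro i j hi
    have hmem : ∀ j, j ∈ (Yk.filter (fun p => p.1 = i)).image Prod.snd ↔ (i, j) ∈ Yk := by
      intro j
      simp only [Finset.mem_image, Finset.mem_filter]
      constructor
      · rintro ⟨p, ⟨hp, h1⟩, h2⟩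
        have : p = (i, j) := Prod.ext h1 h2
        rw [← this]; exact hp
      · intro h; exact ⟨(i, j), ⟨h, rfl⟩, rfl⟩
    rw [← hmem, rowIcc i hi, Finset.mem_Icc]
  -- column characterization
  have colChar : ∀ j s, 1 ≤ s →
      ((a + s, j) ∈ Yk ↔ s ≤ (Yk.filter (fun p => p.2 = j ∧ a < p.1)).card) := by
    intro j s hs
    have hmem : ∀ t, 1 ≤ t →
        (t ∈ (Yk.filter (fun p => p.2 = j ∧ a < p.1)).image (fun p => p.1 - a) ↔
          (a + t, j) ∈ Yk) := by
      intro t ht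
      simp only [Finset.mem_image, Finset.mem_filter]
      constructor
      · rintro ⟨p, ⟨hp, h1, h2⟩, h3⟩
        have : p = (a + t, j) := Prod.ext (by omega) h1
        rw [← this]; exact hp
      · intro h; exact ⟨(a + t, j), ⟨h, rfl, by omega⟩, by omega⟩
    have hcard : ((Yk.filter (fun p => p.2 = j ∧ a < p.1)).image (fun p => p.1 - a)).card =
        (Yk.filter (fun p => p.2 = j ∧ a < p.1)).card := by
      apply Finset.card_image_of_injOn
      intro p hp q hq hpq
      simp only [Finset.mem_coe, Finset.mem_filter] at hp hq
      simp only at hpq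
      exact Prod.ext (by omega) (hp.2.1.trans hq.2.1.symm)
    have hIcc : (Yk.filter (fun p => p.2 = j ∧ a < p.1)).image (fun p => p.1 - a) =
        Finset.Icc 1 ((Yk.filter (fun p => p.2 = j ∧ a < p.1)).card) := by
      rw [← hcard]
      apply downset_eq_Icc
      · intro x hx
        simp only [Finset.mem_image, Finset.mem_filter] at hx
        obtain ⟨p, ⟨_, _, h2⟩, h3⟩ := hx
        omega
      · intro x hx y hy1 hy2
        have hx' := (hmem x (by omega)).mp hx
        rw [hmem y hy1]
        exact down _ _ hx' (by omega) (hpos _ hx').2.1 (by omega) (le_refl _)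
    rw [← hmem s hs, hIcc, Finset.mem_Icc]
    omega
  -- L values
  have Lval0 : L 0 = 0 := by rw [hLdef]; unfold restrictL; simp
  have Lval1 : ∀ i, 1 ≤ i → i ≤ a → L i = rowLen Yk i := by
    intro i h1 h2
    rw [hLdef]; unfold restrictL
    rw [if_neg (by omega), if_pos (by rw [← hadef]; exact h2)]
  have Lval2 : ∀ j, 1 ≤ j → j ≤ b → L (a + j) =
      (Yk.filter (fun p => p.2 = j ∧ a < p.1)).card := by
    intro j h1 h2
    rw [hLdef]; unfold restrictL
    rw [if_neg (by omega), if_neg (by rw [← hadef]; omega), if_pos (by omega)]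
    congr 1
    ext p
    rw [← hadef]
    have : a + j - a = j := by omega
    rw [this]
  have Lval3 : ∀ i, k < i → L i = 0 := by
    intro i h1
    rw [hLdef]; unfold restrictL
    rw [if_neg (by omega), if_neg (by rw [← hadef]; omega), if_neg (by omega)]
  -- membership characterization
  have memYk : ∀ i j, 1 ≤ i → 1 ≤ j →
      ((i, j) ∈ Yk ↔ (i ≤ a ∧ j ≤ L i) ∨ (a < i ∧ j ≤ b ∧ i - a ≤ L (a + j))) := by
    intro i j hi hj
    constructor
    · intro h
      rcases F3 i j h with hia | ⟨hia, hjb⟩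
      · left
        refine ⟨hia, ?_⟩
        rw [Lval1 i hi hia]
        exact ((rowChar i j hi).mp h).2
      · right
        refine ⟨hia, hjb, ?_⟩
        rw [Lval2 j hj hjb]
        have : (a + (i - a), j) ∈ Yk := by
          have : a + (i - a) = i := by omega
          rw [this]; exact h
        exact (colChar j (i - a) (by omega)).mp this
    · rintro (⟨hia, hjl⟩ | ⟨hia, hjb, hil⟩)
      · rw [Lval1 i hi hia] at hjl
        exact (rowChar i j hi).mpr ⟨hj, hjl⟩
      · rw [Lval2 j hj hjb] at hil
        have := (colChar j (i - a) (by omega)).mpr hil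
        have heq : a + (i - a) = i := by omega
        rw [heq] at this
        exact this
  constructor
  · -- IsHook
    refine ⟨Lval0, ?_, ?_, ?_⟩
    · intro i hi; exact Lval3 i (by omega)
    · intro i h1 h2 h3
      rw [hab] at h2
      rcases le_or_gt (i + 1) a with hia | hia
      · -- rows
        rw [Lval1 i h1 (by omega), Lval1 (i + 1) (by omega) hia]
        rcases Nat.eq_zero_or_pos (rowLen Yk (i + 1)) with h0 | h0
        · omega
        · have hm : (i + 1, rowLen Yk (i + 1)) ∈ Yk :=
            (rowChar (i + 1) _ (by omega)).mpr ⟨h0, le_refl _⟩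
          have hm' : (i, rowLen Yk (i + 1)) ∈ Yk :=
            down _ _ hm h1 h0 (by omega) (le_refl _)
          exact ((rowChar i _ h1).mp hm').2
      · -- columns: a < i (since i ≠ a and i + 1 > a)
        have hia' : a < i := by omega
        have LA : L i = (Yk.filter (fun p => p.2 = i - a ∧ a < p.1)).card := by
          have := Lval2 (i - a) (by omega) (by omega)
          rwa [show a + (i - a) = i from by omega] at this
        have LB : L (i + 1) = (Yk.filter (fun p => p.2 = i - a + 1 ∧ a < p.1)).card := by
          have := Lval2 (i - a + 1) (by omega) (by omega)
          rwa [show a + (i - a + 1) = i + 1 from by omega] at this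
        rw [LA, LB]
        rcases Nat.eq_zero_or_pos ((Yk.filter (fun p => p.2 = i - a + 1 ∧ a < p.1)).card)
          with h0 | h0
        · omega
        · set c := (Yk.filter (fun p => p.2 = i - a + 1 ∧ a < p.1)).card with hc
          have hm : (a + c, i - a + 1) ∈ Yk := (colChar _ c h0).mpr (le_refl _)
          have hm' : (a + c, i - a) ∈ Yk :=
            down _ _ hm (by omega) (by omega) (le_refl _) (by omega)
          exact (colChar _ c h0).mp hm'
    · intro j h1 h2 h3
      rw [Lval2 j h1 h2] at h3
      have hm : (a + (Yk.filter (fun p => p.2 = j ∧ a < p.1)).card, j) ∈ Yk :=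
        (colChar j _ h3).mpr (le_refl _)
      have hm' : (a, j) ∈ Yk := down _ _ hm ha1 h1 (by omega) (le_refl _)
      rw [Lval1 a ha1 (le_refl _)]
      exact ((rowChar a j ha1).mp hm').2
  · -- Ydiag equality
    ext p
    obtain ⟨i, j⟩ := p
    rw [mem_Ydiag]
    simp only
    constructor
    · rintro ⟨h1, h2, h3⟩
      exact (memYk i j h1 h2).mpr h3
    · intro h
      obtain ⟨h1, h2, _, _⟩ := hpos _ h
      exact ⟨h1, h2, (memYk i j h1 h2).mp h⟩
lemma restrict_tab {M N : ℕ} {lam : ℕ → ℕ}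
    {f : ℕ × ℕ → ℕ} (hf : IsTabOn M N (Ydiag M N lam) f) {k : ℕ} :
    IsTabOn (Mk M k) (Nk M k) ((Ydiag M N lam).filter (fun p => f p ≤ k)) f := by
  refine ⟨?_, ?_, ?_, ?_⟩
  · intro p hp; rw [Finset.mem_filter] at hp
    exact ⟨(hf.1 p hp.1).1, by rw [Mk_add_Nk]; exact hp.2⟩
  · intro p q hp hq h1 h2
    rw [Finset.mem_filter] at hp hq
    exact hf.2.1 p q hp.1 hq.1 h1 h2
  · intro i j hp hq h
    rw [Finset.mem_filter] at hp hq
    exact hf.2.2.1 i j hp.1 hq.1 (le_trans h (by unfold Mk; omega))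
  · intro i j hp hq h
    rw [Finset.mem_filter] at hp hq
    rcases le_or_gt k M with hkM | hkM
    · exfalso
      have hMk : Mk M k = k := by unfold Mk; omega
      have := hp.2
      omega
    · have hMk : Mk M k = M := by unfold Mk; omega
      exact hf.2.2.2 i j hp.1 hq.1 (by omega)

lemma part1 (M N : ℕ) (hM : 0 < M) (hN : 0 < N) (lam : ℕ → ℕ) (hlam : IsHook M N lam)
    (f : ℕ × ℕ → ℕ) (hf : IsTabOn M N (Ydiag M N lam) f)
    (hf0 : ∀ p, p ∉ Ydiag M N lam → f p = 0) :
    ∃! L : ℕ → ℕ → ℕ, IsGTseq M N lam L ∧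
        ∀ k, 1 ≤ k → k ≤ M + N →
          Ydiag (Mk M k) (Nk M k) (L k) = (Ydiag M N lam).filter (fun p => f p ≤ k) := by
  set L : ℕ → ℕ → ℕ :=
    fun k => if 1 ≤ k ∧ k ≤ M + N then restrictL M N lam f k else fun _ => 0 with hL
  have hLval : ∀ k, 1 ≤ k → k ≤ M + N → L k = restrictL M N lam f k := by
    intro k h1 h2; rw [hL]; simp only [if_pos (And.intro h1 h2)]
  have hLzero : ∀ k, ¬(1 ≤ k ∧ k ≤ M + N) → ∀ i, L k i = 0 := by
    intro k h i; rw [hL]; simp only [if_neg h]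
  have hfilter : ∀ k, 1 ≤ k → k ≤ M + N →
      Ydiag (Mk M k) (Nk M k) (L k) = (Ydiag M N lam).filter (fun p => f p ≤ k) := by
    intro k h1 h2; rw [hLval k h1 h2]; exact (restrict_spec hM hlam hf h1 h2).2
  have hhook : ∀ k, 1 ≤ k → k ≤ M + N → IsHook (Mk M k) (Nk M k) (L k) := by
    intro k h1 h2; rw [hLval k h1 h2]; exact (restrict_spec hM hlam hf h1 h2).1
  have htop : L (M + N) = lam := by
    have h1 : (1:ℕ) ≤ M + N := by omega
    have hfull : (Ydiag M N lam).filter (fun p => f p ≤ M + N) = Ydiag M N lam :=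
      Finset.filter_true_of_mem (fun p hp => (hf.1 p hp).2)
    have heq := hfilter (M + N) h1 (le_refl _)
    rw [hfull] at heq
    have hh := hhook (M + N) h1 (le_refl _)
    rw [Mk_top, Nk_top] at heq hh
    exact Ydiag_ext hh hlam heq
  refine ⟨L, ⟨⟨htop, ?_, ?_, ?_⟩, hfilter⟩, ?_⟩
  · intro k hk2 hkMN
    refine ⟨hhook (k - 1) (by omega) (by omega), f, ?_, ?_⟩
    · rw [hfilter k (by omega) hkMN]; exact restrict_tab hf
    · rw [hfilter k (by omega) hkMN, hfilter (k - 1) (by omega) (by omega), Mk_add_Nk]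
      ext p
      simp only [Finset.mem_filter]
      constructor
      · rintro ⟨hp, h⟩; exact ⟨⟨hp, by omega⟩, h⟩
      · rintro ⟨⟨hp, _⟩, h⟩; exact ⟨hp, h⟩
  · intro i; exact hLzero 0 (by omega) i
  · intro k hk i; exact hLzero k (by omega) i
  · rintro L' ⟨hGT', hfil'⟩
    funext k
    rcases Nat.eq_zero_or_pos k with h0 | h1
    · subst h0
      funext i
      rw [hGT'.2.2.1 i, hLzero 0 (by omega) i]
    rcases le_or_gt k (M + N) with h2 | h2
    · have hh' : IsHook (Mk M k) (Nk M k) (L' k) := by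
        rcases eq_or_lt_of_le h2 with he | hlt
        · rw [he, hGT'.1, Mk_top, Nk_top]; exact hlam
        · have := (hGT'.2.1 (k + 1) (by omega) (by omega)).1
          simpa using this
      have heq : Ydiag (Mk M k) (Nk M k) (L' k) = Ydiag (Mk M k) (Nk M k) (L k) := by
        rw [hfil' k h1 h2, hfilter k h1 h2]
      exact Ydiag_ext hh' (hhook k h1 h2) heq
    · funext i
      rw [hGT'.2.2.2 k h2 i, hLzero k (by omega) i]
lemma GT_hook {M N : ℕ} {lam : ℕ → ℕ} (hlam : IsHook M N lam) {L : ℕ → ℕ → ℕ}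
    (hL : IsGTseq M N lam L) {k : ℕ} (h1 : 1 ≤ k) (h2 : k ≤ M + N) :
    IsHook (Mk M k) (Nk M k) (L k) := by
  rcases eq_or_lt_of_le h2 with he | hlt
  · rw [he, hL.1, Mk_top, Nk_top]; exact hlam
  · have := (hL.2.1 (k + 1) (by omega) (by omega)).1
    simpa using this

lemma GT_chain {M N : ℕ} {lam : ℕ → ℕ} {L : ℕ → ℕ → ℕ}
    (hL : IsGTseq M N lam L) :
    ∀ k j, 1 ≤ j → j ≤ k → k ≤ M + N →
      Ydiag (Mk M j) (Nk M j) (L j) ⊆ Ydiag (Mk M k) (Nk M k) (L k) := by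
  intro k
  induction k with
  | zero => intro j h1 h2 h3; omega
  | succ k ih =>
    intro j h1 h2 h3
    rcases eq_or_lt_of_le h2 with he | hlt
    · rw [he]
    · have step : Ydiag (Mk M k) (Nk M k) (L k) ⊆
          Ydiag (Mk M (k + 1)) (Nk M (k + 1)) (L (k + 1)) := by
        obtain ⟨_, g, _, heq⟩ := hL.2.1 (k + 1) (by omega) h3
        intro p hp
        have hp' : p ∈ Ydiag (Mk M (k + 1 - 1)) (Nk M (k + 1 - 1)) (L (k + 1 - 1)) := by
          simpa using hp
        rw [heq] at hp'
        exact (Finset.mem_filter.mp hp').1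
      exact fun p hp => step (ih j h1 (by omega) (by omega) hp)

lemma part2 (M N : ℕ) (hM : 0 < M) (hN : 0 < N) (lam : ℕ → ℕ) (hlam : IsHook M N lam)
    (L : ℕ → ℕ → ℕ) (hL : IsGTseq M N lam L) :
    ∃! f : ℕ × ℕ → ℕ,
        (IsTabOn M N (Ydiag M N lam) f ∧ ∀ p, p ∉ Ydiag M N lam → f p = 0) ∧
        ∀ k, 1 ≤ k → k ≤ M + N →
          Ydiag (Mk M k) (Nk M k) (L k) = (Ydiag M N lam).filter (fun p => f p ≤ k) := by
  classical
  set S : ℕ × ℕ → Set ℕ :=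
    fun p => {k | 1 ≤ k ∧ p ∈ Ydiag (Mk M k) (Nk M k) (L k)} with hS
  set f : ℕ × ℕ → ℕ := fun p => if p ∈ Ydiag M N lam then sInf (S p) else 0 with hf
  have htopY : Ydiag (Mk M (M + N)) (Nk M (M + N)) (L (M + N)) = Ydiag M N lam := by
    rw [Mk_top, Nk_top, hL.1]
  have hmemS : ∀ p, p ∈ Ydiag M N lam → (M + N) ∈ S p := by
    intro p hp
    refine ⟨by omega, ?_⟩
    rw [htopY]; exact hp
  have hfval : ∀ p, p ∈ Ydiag M N lam → f p = sInf (S p) := by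
    intro p hp; rw [hf]; simp only [if_pos hp]
  have hf_mem : ∀ p, p ∈ Ydiag M N lam → f p ∈ S p := by
    intro p hp; rw [hfval p hp]; exact Nat.sInf_mem ⟨M + N, hmemS p hp⟩
  have hf_le : ∀ p, p ∈ Ydiag M N lam → f p ≤ M + N := by
    intro p hp; rw [hfval p hp]; exact Nat.sInf_le (hmemS p hp)
  have hf_ge : ∀ p, p ∈ Ydiag M N lam → 1 ≤ f p := fun p hp => (hf_mem p hp).1
  have hf_in : ∀ p, p ∈ Ydiag M N lam → p ∈ Ydiag (Mk M (f p)) (Nk M (f p)) (L (f p)) :=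
    fun p hp => (hf_mem p hp).2
  have hf_not : ∀ p, p ∈ Ydiag M N lam → ∀ k, 1 ≤ k → k < f p →
      p ∉ Ydiag (Mk M k) (Nk M k) (L k) := by
    intro p hp k h1 h2 hmem
    have hsle : sInf (S p) ≤ k := Nat.sInf_le ⟨h1, hmem⟩
    rw [hfval p hp] at h2; omega
  have hfilter : ∀ k, 1 ≤ k → k ≤ M + N →
      Ydiag (Mk M k) (Nk M k) (L k) = (Ydiag M N lam).filter (fun p => f p ≤ k) := by
    intro k h1 h2
    ext p
    rw [Finset.mem_filter]
    constructor
    · intro hp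
      have hpY : p ∈ Ydiag M N lam := by
        rw [← htopY]; exact GT_chain hL (M + N) k h1 h2 (le_refl _) hp
      refine ⟨hpY, ?_⟩
      rw [hfval p hpY]
      exact Nat.sInf_le ⟨h1, hp⟩
    · rintro ⟨hpY, hle⟩
      exact GT_chain hL k (f p) (hf_ge p hpY) hle h2 (hf_in p hpY)
  have hstrict : ∀ p, p ∈ Ydiag M N lam → 2 ≤ f p →
      ∃ g, IsTabOn (Mk M (f p)) (Nk M (f p))
          (Ydiag (Mk M (f p)) (Nk M (f p)) (L (f p))) g ∧
        g p = f p ∧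
        ∀ q ∈ Ydiag (Mk M (f p)) (Nk M (f p)) (L (f p)), g q ≤ f p := by
    intro p hp h2
    have hfp : f p ≤ M + N := hf_le p hp
    obtain ⟨_, g, hg, heq⟩ := hL.2.1 (f p) h2 hfp
    have hgub : ∀ q ∈ Ydiag (Mk M (f p)) (Nk M (f p)) (L (f p)), g q ≤ f p := by
      intro q hq
      have := (hg.1 q hq).2
      rwa [Mk_add_Nk] at this
    refine ⟨g, hg, ?_, hgub⟩
    have h1 : p ∉ Ydiag (Mk M (f p - 1)) (Nk M (f p - 1)) (L (f p - 1)) := by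
      have hfp1 : f p - 1 + 1 = f p := by omega
      have := hf_not p hp (f p - 1) (by omega) (by omega)
      simpa using this
    rw [show f p - 1 = f p - 1 from rfl] at h1
    have heq' : Ydiag (Mk M (f p - 1)) (Nk M (f p - 1)) (L (f p - 1)) =
        (Ydiag (Mk M (f p)) (Nk M (f p)) (L (f p))).filter
          (fun q => g q ≤ f p - 1) := by
      rw [heq]
      congr 1
      funext q
      rw [Mk_add_Nk]
    rw [heq', Finset.mem_filter] at h1
    push_neg at h1
    have hin := hf_in p hp
    have hgt := h1 hin
    have hub := hgub p hin
    omega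
  have hf0 : ∀ p, p ∉ Ydiag M N lam → f p = 0 := by
    intro p hp; rw [hf]; simp only [if_neg hp]
  have htab : IsTabOn M N (Ydiag M N lam) f := by
    refine ⟨fun p hp => ⟨hf_ge p hp, hf_le p hp⟩, ?_, ?_, ?_⟩
    · intro p q hp hq h1 h2
      have hk1 : 1 ≤ f q := hf_ge q hq
      have hk2 : f q ≤ M + N := hf_le q hq
      have hhk : IsHook (Mk M (f q)) (Nk M (f q)) (L (f q)) := GT_hook hlam hL hk1 hk2
      have hpq : p ∈ Ydiag (Mk M (f q)) (Nk M (f q)) (L (f q)) :=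
        Ydiag_downclosed hhk (hf_in q hq) (mem_Ydiag.mp hp).1 (mem_Ydiag.mp hp).2.1 h1 h2
      rw [hfval p hp]
      exact Nat.sInf_le ⟨hk1, hpq⟩
    · intro i j hp hq hle
      by_contra hcon
      push_neg at hcon
      have hc1 : 1 ≤ f (i, j) := hf_ge _ hp
      have hcMN : f (i, j) ≤ M + N := hf_le _ hp
      have hin2 : (i + 1, j) ∈ Ydiag (Mk M (f (i, j))) (Nk M (f (i, j))) (L (f (i, j))) := by
        rw [hfilter (f (i, j)) hc1 hcMN, Finset.mem_filter]
        exact ⟨hq, hcon⟩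
      rcases le_or_gt 2 (f (i, j)) with h2 | h2
      · obtain ⟨g, hg, hgp, hgub⟩ := hstrict (i, j) hp h2
        have hMkc : Mk M (f (i, j)) = f (i, j) := by unfold Mk; omega
        have hlt := hg.2.2.1 i j (hf_in _ hp) hin2 (by rw [hgp, hMkc])
        have hub2 := hgub _ hin2
        omega
      · have hc1' : f (i, j) = 1 := by omega
        rw [hc1'] at hin2
        rw [mem_Ydiag] at hin2
        obtain ⟨_, hj1, hcond⟩ := hin2
        have hi1 : 1 ≤ i := (mem_Ydiag.mp hp).1
        have hMk1 : Mk M 1 = 1 := by unfold Mk; omega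
        have hNk1 : Nk M 1 = 0 := by unfold Nk; omega
        simp only at hcond hj1 hi1
        rcases hcond with ⟨ha, _⟩ | ⟨_, hb, _⟩ <;> omega
    · intro i j hp hq hle
      by_contra hcon
      push_neg at hcon
      have hc1 : 1 ≤ f (i, j) := hf_ge _ hp
      have hcMN : f (i, j) ≤ M + N := hf_le _ hp
      have hin2 : (i, j + 1) ∈ Ydiag (Mk M (f (i, j))) (Nk M (f (i, j))) (L (f (i, j))) := by
        rw [hfilter (f (i, j)) hc1 hcMN, Finset.mem_filter]
        exact ⟨hq, hcon⟩
      have h2 : 2 ≤ f (i, j) := by omega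
      obtain ⟨g, hg, hgp, hgub⟩ := hstrict (i, j) hp h2
      have hMkc : Mk M (f (i, j)) = M := by unfold Mk; omega
      have hlt := hg.2.2.2 i j (hf_in _ hp) hin2 (by rw [hgp, hMkc]; omega)
      have hub2 := hgub _ hin2
      omega
  refine ⟨f, ⟨⟨htab, hf0⟩, hfilter⟩, ?_⟩
  rintro g ⟨⟨hgtab, hg0⟩, hgfil⟩
  funext p
  by_cases hp : p ∈ Ydiag M N lam
  · have h1 : g p ≤ f p := by
      have h := hgfil (f p) (hf_ge p hp) (hf_le p hp)
      have := hf_in p hp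
      rw [h, Finset.mem_filter] at this
      exact this.2
    have h2 : f p ≤ g p := by
      have hb := hgtab.1 p hp
      have h := hgfil (g p) hb.1 hb.2
      have hpmem : p ∈ Ydiag (Mk M (g p)) (Nk M (g p)) (L (g p)) := by
        rw [h, Finset.mem_filter]; exact ⟨hp, le_refl _⟩
      rw [hfval p hp]
      exact Nat.sInf_le ⟨hb.1, hpmem⟩
    omega
  · rw [hg0 p hp, hf0 p hp]
/-- the correspondence `GT_λ` between tableaux of shape `Y^λ` and
Gelfand–Tsetlin patterns with top weight `λ` is bijective. -/
theorem GT_patterns_tableaux_bijection (M N : ℕ) (hM : 0 < M) (hN : 0 < N)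
    (lam : ℕ → ℕ) (hlam : IsHook M N lam) :
    (∀ f : ℕ × ℕ → ℕ, IsTabOn M N (Ydiag M N lam) f →
      (∀ p, p ∉ Ydiag M N lam → f p = 0) →
      ∃! L : ℕ → ℕ → ℕ, IsGTseq M N lam L ∧
        ∀ k, 1 ≤ k → k ≤ M + N →
          Ydiag (Mk M k) (Nk M k) (L k) = (Ydiag M N lam).filter (fun p => f p ≤ k)) ∧
    (∀ L : ℕ → ℕ → ℕ, IsGTseq M N lam L →
      ∃! f : ℕ × ℕ → ℕ,
        (IsTabOn M N (Ydiag M N lam) f ∧ ∀ p, p ∉ Ydiag M N lam → f p = 0) ∧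
        ∀ k, 1 ≤ k → k ≤ M + N →
          Ydiag (Mk M k) (Nk M k) (L k) = (Ydiag M N lam).filter (fun p => f p ≤ k)) := by
  exact ⟨fun f hf hf0 => part1 M N hM hN lam hlam f hf hf0,
    fun L hL => part2 M N hM hN lam hlam L hL⟩
end

section
/- If f is a gl(M,N)-Young tableau of shape Y^λ for a hook partition λ, then for every 1 ≤ k ≤ M+N, the set of boxes f^{-1}({1,...,k}) ⊆ Y^λ is itself a gl(M_k,N_k)-Young diagram, and the restriction of f to this subset is a gl(M_k,N_k)-Young tableau of that shape. -/
def IsGlYD (M N : ℕ) (Y : Finset (ℕ × ℕ)) : Prop :=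
  (∀ p ∈ Y, 1 ≤ p.1 ∧ 1 ≤ p.2) ∧
  (∀ i j, (i, j + 1) ∈ Y → 1 ≤ j → (i, j) ∈ Y) ∧
  (∀ i, 1 ≤ i → rowLen Y (i + 1) ≤ rowLen Y i) ∧
  rowLen Y (M + 1) ≤ N

/-!
Entries of a tableau weakly increase down columns, strictly as long as they are at most `M`,
so the box `(i, j)` with `i ≤ M + 1` carries an entry `≥ i`. Hence the sublevel set
`{f ≤ k}` has no box in row `k + 1` when `k ≤ M`, while for `k > M` its row `M + 1` is strictly
increasing with entries in `[M + 1, k]`, so it has at most `k - M` boxes. Monotonicity of `f`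
makes the sublevel set a Young diagram, and the strictness conditions restrict to it.
-/

def RowClosed (Y : Finset (ℕ × ℕ)) : Prop :=
  ∀ i j, (i, j + 1) ∈ Y → 1 ≤ j → (i, j) ∈ Y

def ColClosed (Y : Finset (ℕ × ℕ)) : Prop :=
  ∀ i j, (i + 1, j) ∈ Y → 1 ≤ i → (i, j) ∈ Y

section Closure

variable {Y : Finset (ℕ × ℕ)} {f : ℕ × ℕ → ℕ}

theorem RowClosed.filter_le (hY : RowClosed Y) (hf : MonotoneOn f Y) (k : ℕ) :
    RowClosed (Y.filter (fun p => f p ≤ k)) := by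
  intro i j hp hj
  rw [Finset.mem_filter] at hp ⊢
  have hmem := hY i j hp.1 hj
  exact ⟨hmem, (hf hmem hp.1 (Prod.mk_le_mk.2 ⟨le_rfl, j.le_succ⟩)).trans hp.2⟩

theorem ColClosed.filter_le (hY : ColClosed Y) (hf : MonotoneOn f Y) (k : ℕ) :
    ColClosed (Y.filter (fun p => f p ≤ k)) := by
  intro i j hp hi
  rw [Finset.mem_filter] at hp ⊢
  have hmem := hY i j hp.1 hi
  exact ⟨hmem, (hf hmem hp.1 (Prod.mk_le_mk.2 ⟨i.le_succ, le_rfl⟩)).trans hp.2⟩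

theorem ColClosed.rowLen_succ_le (hY : ColClosed Y) {i : ℕ} (hi : 1 ≤ i) :
    rowLen Y (i + 1) ≤ rowLen Y i := by
  refine Finset.card_le_card_of_injOn (fun p => (i, p.2)) ?_ ?_
  · rintro ⟨i', j⟩ hp
    simp only [Finset.coe_filter, Set.mem_ofPred_eq] at hp
    obtain ⟨hp, rfl⟩ := hp
    exact Finset.mem_filter.2 ⟨hY i j hp hi, rfl⟩
  · rintro ⟨i₁, j₁⟩ hp ⟨i₂, j₂⟩ hq h
    simp only [Finset.coe_filter, Set.mem_ofPred_eq] at hp hq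
    simp only [Prod.mk.injEq, true_and] at h
    rw [hp.2, hq.2, h]

end Closure

section Hook

variable {M N : ℕ} {lam : ℕ → ℕ}

theorem mem_Ydiag_s7 {i j : ℕ} :
    (i, j) ∈ Ydiag M N lam ↔
      (1 ≤ i ∧ i ≤ M + N + (Finset.range (M + N + 1)).sup lam) ∧
      (1 ≤ j ∧ j ≤ N + (Finset.range (M + N + 1)).sup lam) ∧
      ((i ≤ M ∧ j ≤ lam i) ∨ (M < i ∧ j ≤ N ∧ i - M ≤ lam (M + j))) := by
  simp [Ydiag, and_assoc]

theorem one_le_of_mem_Ydiag {p : ℕ × ℕ} (hp : p ∈ Ydiag M N lam) : 1 ≤ p.1 ∧ 1 ≤ p.2 := by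
  obtain ⟨i, j⟩ := p
  rw [mem_Ydiag_s7] at hp
  exact ⟨hp.1.1, hp.2.1.1⟩

theorem IsHook.rowClosed_Ydiag (hlam : IsHook M N lam) : RowClosed (Ydiag M N lam) := by
  obtain ⟨-, -, hdec, -⟩ := hlam
  intro i j h hj
  rw [mem_Ydiag_s7] at h ⊢
  obtain ⟨hi, hjb, hbox⟩ := h
  refine ⟨hi, ⟨hj, by omega⟩, ?_⟩
  rcases hbox with ⟨hiM, hle⟩ | ⟨hMi, hjN, hle⟩
  · exact Or.inl ⟨hiM, by omega⟩
  · have : lam (M + (j + 1)) ≤ lam (M + j) := hdec (M + j) (by omega) (by omega) (by omega)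
    exact Or.inr ⟨hMi, by omega, by omega⟩

theorem IsHook.colClosed_Ydiag (hlam : IsHook M N lam) : ColClosed (Ydiag M N lam) := by
  obtain ⟨-, -, hdec, hhook⟩ := hlam
  intro i j h hi
  rw [mem_Ydiag_s7] at h ⊢
  obtain ⟨hib, hj, hbox⟩ := h
  refine ⟨⟨hi, by omega⟩, hj, ?_⟩
  rcases hbox with ⟨hiM, hle⟩ | ⟨hMi, hjN, hle⟩
  · have := hdec i hi (by omega) (by omega)
    exact Or.inl ⟨by omega, by omega⟩
  · rcases Nat.lt_or_ge M i with hMi' | hiM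
    · exact Or.inr ⟨hMi', hjN, by omega⟩
    · obtain rfl : i = M := by omega
      exact Or.inl ⟨le_rfl, hhook j hj.1 hjN (by omega)⟩

end Hook

namespace IsTabOn

variable {a b k : ℕ} {Y : Finset (ℕ × ℕ)} {f : ℕ × ℕ → ℕ}

theorem monotoneOn (hf : IsTabOn a b Y f) : MonotoneOn f Y :=
  fun p hp q hq hpq => hf.2.1 p q hp hq (Prod.mk_le_mk.1 hpq).1 (Prod.mk_le_mk.1 hpq).2

theorem mono (hf : IsTabOn a b Y f) {Z : Finset (ℕ × ℕ)} (hZ : Z ⊆ Y) : IsTabOn a b Z f :=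
  ⟨fun p hp => hf.1 p (hZ hp), fun p q hp hq => hf.2.1 p q (hZ hp) (hZ hq),
    fun i j hp hq => hf.2.2.1 i j (hZ hp) (hZ hq), fun i j hp hq => hf.2.2.2 i j (hZ hp) (hZ hq)⟩

theorem le_apply (hf : IsTabOn a b Y f) (hY : ColClosed Y) :
    ∀ {i j : ℕ}, (i, j) ∈ Y → i ≤ a + 1 → i ≤ f (i, j) := by
  intro i
  induction i with
  | zero => intro j _ _; exact Nat.zero_le _
  | succ i ih =>
    intro j hmem hia
    rcases Nat.eq_zero_or_pos i with rfl | hi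
    · exact (hf.1 _ hmem).1
    · have hmem' := hY i j hmem hi
      have hle := ih hmem' (by omega)
      rcases le_or_gt (f (i, j)) a with hsmall | hlarge
      · have := hf.2.2.1 i j hmem' hmem hsmall
        omega
      · have := hf.2.1 (i, j) (i + 1, j) hmem' hmem i.le_succ le_rfl
        omega

theorem apply_row_succ_lt_of_lt (hf : IsTabOn a b Y f) (hrow : RowClosed Y) (hcol : ColClosed Y)
    {j j' : ℕ} (hj : 1 ≤ j) (hjj' : j < j') (hmem : (a + 1, j') ∈ Y) :
    f (a + 1, j) < f (a + 1, j') := by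
  have step : ∀ {m}, 1 ≤ m → (a + 1, m + 1) ∈ Y →
      (a + 1, m) ∈ Y ∧ f (a + 1, m) < f (a + 1, m + 1) := fun hm hmem =>
    have hmem' := hrow _ _ hmem hm
    ⟨hmem', hf.2.2.2 _ _ hmem' hmem (hf.le_apply hcol hmem' le_rfl)⟩
  induction j', hjj' using Nat.le_induction with
  | base => exact (step hj hmem).2
  | succ m hjm ih =>
    obtain ⟨hmem', hlt⟩ := step (by omega) hmem
    exact (ih hmem').trans hlt

theorem rowLen_succ_le (hf : IsTabOn a b Y f) (hpos : ∀ p ∈ Y, 1 ≤ p.2)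
    (hrow : RowClosed Y) (hcol : ColClosed Y) (hk : ∀ p ∈ Y, f p ≤ k) :
    rowLen Y (a + 1) ≤ k - a := by
  have hcard : (Finset.Icc (a + 1) k).card = k - a := by rw [Nat.card_Icc]; omega
  rw [rowLen, ← hcard]
  refine Finset.card_le_card_of_injOn f ?_ ?_
  · rintro ⟨i, j⟩ hp
    simp only [Finset.coe_filter, Set.mem_ofPred_eq] at hp
    obtain ⟨hp, rfl⟩ := hp
    exact Finset.mem_Icc.2 ⟨hf.le_apply hcol hp le_rfl, hk _ hp⟩
  · rintro ⟨i₁, j₁⟩ hp ⟨i₂, j₂⟩ hq heq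
    simp only [Finset.coe_filter, Set.mem_ofPred_eq] at hp hq
    obtain ⟨hp, rfl⟩ := hp
    obtain ⟨hq, rfl⟩ := hq
    have hj₁ := hpos _ hp
    have hj₂ := hpos _ hq
    rcases lt_trichotomy j₁ j₂ with hlt | rfl | hgt
    · exact absurd heq (hf.apply_row_succ_lt_of_lt hrow hcol hj₁ hlt hq).ne
    · rfl
    · exact absurd heq (hf.apply_row_succ_lt_of_lt hrow hcol hj₂ hgt hp).ne'

theorem rowLen_eq_zero (hf : IsTabOn a b Y f) (hcol : ColClosed Y) (hk : ∀ p ∈ Y, f p ≤ k)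
    (hka : k ≤ a) : rowLen Y (k + 1) = 0 := by
  rw [rowLen, Finset.card_eq_zero, Finset.filter_eq_empty_iff]
  rintro ⟨i, j⟩ hp rfl
  have := hf.le_apply hcol hp (by omega)
  have := hk _ hp
  omega

theorem isGlYD_Mk_Nk (hf : IsTabOn a b Y f) (hpos : ∀ p ∈ Y, 1 ≤ p.1 ∧ 1 ≤ p.2)
    (hrow : RowClosed Y) (hcol : ColClosed Y) (hk : ∀ p ∈ Y, f p ≤ k) :
    IsGlYD (Mk a k) (Nk a k) Y := by
  refine ⟨hpos, hrow, fun i hi => hcol.rowLen_succ_le hi, ?_⟩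
  rcases le_or_gt k a with hka | hak
  · rw [Mk, min_eq_left hka, hf.rowLen_eq_zero hcol hk hka]
    exact Nat.zero_le _
  · rw [Mk, min_eq_right hak.le]
    exact hf.rowLen_succ_le (fun p hp => (hpos p hp).2) hrow hcol hk

theorem isTabOn_Mk_Nk (hf : IsTabOn a b Y f) (hk : ∀ p ∈ Y, f p ≤ k) :
    IsTabOn (Mk a k) (Nk a k) Y f := by
  refine ⟨fun p hp => ?_, hf.2.1, fun i j hp hq hle => ?_, fun i j hp hq hge => ?_⟩
  · have := hk p hp
    exact ⟨(hf.1 p hp).1, by rw [Mk, Nk]; omega⟩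
  · exact hf.2.2.1 i j hp hq (by rw [Mk] at hle; omega)
  · have := hk _ hp
    exact hf.2.2.2 i j hp hq (by rw [Mk] at hge; omega)

end IsTabOn

theorem tableau_restriction_general (M N : ℕ)
    (lam : ℕ → ℕ) (hlam : IsHook M N lam) (f : ℕ × ℕ → ℕ)
    (hf : IsTabOn M N (Ydiag M N lam) f) (k : ℕ) :
    IsGlYD (Mk M k) (Nk M k) ((Ydiag M N lam).filter (fun p => f p ≤ k)) ∧
    IsTabOn (Mk M k) (Nk M k) ((Ydiag M N lam).filter (fun p => f p ≤ k)) f := by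
  have hfk := hf.mono (Finset.filter_subset (fun p => f p ≤ k) _)
  have hk : ∀ p ∈ (Ydiag M N lam).filter (fun p => f p ≤ k), f p ≤ k :=
    fun p hp => (Finset.mem_filter.1 hp).2
  have hpos : ∀ p ∈ (Ydiag M N lam).filter (fun p => f p ≤ k), 1 ≤ p.1 ∧ 1 ≤ p.2 :=
    fun p hp => one_le_of_mem_Ydiag (Finset.mem_filter.1 hp).1
  exact ⟨hfk.isGlYD_Mk_Nk hpos (hlam.rowClosed_Ydiag.filter_le hf.monotoneOn k)
    (hlam.colClosed_Ydiag.filter_le hf.monotoneOn k) hk, hfk.isTabOn_Mk_Nk hk⟩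

/-- the boxes of a tableau with entries `≤ k` form a
`gl(M_k,N_k)`-Young diagram, on which the tableau restricts to a
`gl(M_k,N_k)`-Young tableau. -/
theorem tableau_restriction (M N : ℕ) (hM : 0 < M) (hN : 0 < N)
    (lam : ℕ → ℕ) (hlam : IsHook M N lam) (f : ℕ × ℕ → ℕ)
    (hf : IsTabOn M N (Ydiag M N lam) f) (k : ℕ) (hk1 : 1 ≤ k) (hk2 : k ≤ M + N) :
    IsGlYD (Mk M k) (Nk M k) ((Ydiag M N lam).filter (fun p => f p ≤ k)) ∧
    IsTabOn (Mk M k) (Nk M k) ((Ydiag M N lam).filter (fun p => f p ≤ k)) f :=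
  tableau_restriction_general M N lam hlam f hf k
end

section
/- For gl(2,1), in the (M,N) = (2,1) hook case: for every k ≥ 1, the normalized q-character of the Kirillov–Reshetikhin evaluation module W^{(2)}_{k, a q^{2k}} is 1 + [A_{2,aq^3}]^{-1} + [A_{1,aq}]^{-1}[A_{2,aq^3}]^{-1} + [A_{1,aq}]^{-1}[A_{2,aq}]^{-1}[A_{2,aq^3}]^{-1}; equivalently, via the combinatorial formula χ̃_q = Σ_{f ∈ 𝓑(Y^{kϖ_2})} Π_{(i,j)} 𝔛_{f(i,j), a q^{2k}q^{2(i−j)−1}}·(normalization), the rectangle {1,2}×{1,...,k} has exactly 4 gl(2,1)-Young tableaux f, with the corresponding monomials as listed, independent of k. -/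
def IsRectTab (M N r k : ℕ) (f : ℕ → ℕ → ℕ) : Prop :=
  (∀ i j, 1 ≤ i → i ≤ r → 1 ≤ j → j ≤ k → 1 ≤ f i j ∧ f i j ≤ M + N) ∧
  (∀ i i' j j', 1 ≤ i → i ≤ i' → i' ≤ r → 1 ≤ j → j ≤ j' → j' ≤ k → f i j ≤ f i' j') ∧
  (∀ i j, 1 ≤ i → i + 1 ≤ r → 1 ≤ j → j ≤ k → f i j ≤ M → f i j < f (i + 1) j) ∧
  (∀ i j, 1 ≤ i → i ≤ r → 1 ≤ j → j + 1 ≤ k → M + 1 ≤ f i j → f i j < f i (j + 1))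

def RectNorm (r k : ℕ) (g : ℕ → ℕ → ℕ) : Prop :=
  ∀ i j, ¬(1 ≤ i ∧ i ≤ r ∧ 1 ≤ j ∧ j ≤ k) → g i j = 0

/-- generalized simple root `A_{i,x}`, additively in the free abelian group on the
symbols `𝔛_{i,x}`. -/
noncomputable def Agen (i : ℕ) (x : ℂ) : FreeAbelianGroup (ℕ × ℂ) :=
  FreeAbelianGroup.of (i, x) - FreeAbelianGroup.of (i + 1, x)

/-- for gl(2,1), the rectangle `{1,2}×{1,…,k}` has exactly 4 Young
tableaux, and the normalized q-character of `W^{(2)}_{k,aq^{2k}}` is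
`1 + [A_{2,aq³}]⁻¹ + [A_{1,aq}]⁻¹[A_{2,aq³}]⁻¹ + [A_{1,aq}]⁻¹[A_{2,aq}]⁻¹[A_{2,aq³}]⁻¹`,
independent of `k`. -/
theorem gl21_KR_qchar (k : ℕ) (hk : 1 ≤ k) (q a : ℂ) (hq : q ≠ 0)
    (hroot : ∀ n : ℕ, 0 < n → q ^ n ≠ 1) (ha : a ≠ 0)
    (f1 f2 f3 f4 : ℕ → ℕ → ℕ)
    (h1 : f1 = fun i j => if 1 ≤ i ∧ i ≤ 2 ∧ 1 ≤ j ∧ j ≤ k then i else 0)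
    (h2 : f2 = fun i j => if 1 ≤ i ∧ i ≤ 2 ∧ 1 ≤ j ∧ j ≤ k then
      (if i = 2 ∧ j = k then 3 else i) else 0)
    (h3 : f3 = fun i j => if 1 ≤ i ∧ i ≤ 2 ∧ 1 ≤ j ∧ j ≤ k then
      (if j = k then i + 1 else i) else 0)
    (h4 : f4 = fun i j => if 1 ≤ i ∧ i ≤ 2 ∧ 1 ≤ j ∧ j ≤ k then
      (if j = k then 3 else i) else 0)
    (Phi : (ℕ → ℕ → ℕ) → FreeAbelianGroup (ℕ × ℂ))
    (hPhi : ∀ f, Phi f = ∑ p ∈ Finset.Icc 1 2 ×ˢ Finset.Icc 1 k,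
      (FreeAbelianGroup.of (f p.1 p.2, a * q ^ (2 * (k : ℤ) + 2 * ((p.1 : ℤ) - p.2) - 1))
        - FreeAbelianGroup.of (p.1, a * q ^ (2 * (k : ℤ) + 2 * ((p.1 : ℤ) - p.2) - 1)))) :
    {f | IsRectTab 2 1 2 k f ∧ RectNorm 2 k f} = {f1, f2, f3, f4} ∧
    (AddMonoidAlgebra.single (Phi f1) (1 : ℤ) + AddMonoidAlgebra.single (Phi f2) 1
        + AddMonoidAlgebra.single (Phi f3) 1 + AddMonoidAlgebra.single (Phi f4) 1 :
        AddMonoidAlgebra ℤ (FreeAbelianGroup (ℕ × ℂ)))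
      = AddMonoidAlgebra.single 0 1
        + AddMonoidAlgebra.single (-(Agen 2 (a * q ^ (3 : ℕ)))) 1
        + AddMonoidAlgebra.single (-(Agen 1 (a * q)) - Agen 2 (a * q ^ (3 : ℕ))) 1
        + AddMonoidAlgebra.single
            (-(Agen 1 (a * q)) - Agen 2 (a * q) - Agen 2 (a * q ^ (3 : ℕ))) 1 := by

  -- value lemmas for f1..f4
  have V1 : ∀ i j, 1 ≤ i → i ≤ 2 → 1 ≤ j → j ≤ k → f1 i j = i := by
    intro i j a b c d
    simp only [h1]
    rw [if_pos ⟨a, b, c, d⟩]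
  have N1 : ∀ i j, ¬(1 ≤ i ∧ i ≤ 2 ∧ 1 ≤ j ∧ j ≤ k) → f1 i j = 0 := by
    intro i j h; simp only [h1]; rw [if_neg h]
  have V2gen : ∀ i j, 1 ≤ i → i ≤ 2 → 1 ≤ j → j ≤ k → ¬(i = 2 ∧ j = k) → f2 i j = i := by
    intro i j a b c d e
    simp only [h2]
    rw [if_pos ⟨a, b, c, d⟩, if_neg e]
  have V2k : f2 2 k = 3 := by
    simp [h2, hk]
  have N2 : ∀ i j, ¬(1 ≤ i ∧ i ≤ 2 ∧ 1 ≤ j ∧ j ≤ k) → f2 i j = 0 := by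
    intro i j h; simp only [h2]; rw [if_neg h]
  have V3gen : ∀ i j, 1 ≤ i → i ≤ 2 → 1 ≤ j → j ≤ k → j ≠ k → f3 i j = i := by
    intro i j a b c d e
    simp only [h3]
    rw [if_pos ⟨a, b, c, d⟩, if_neg e]
  have V3k : ∀ i, 1 ≤ i → i ≤ 2 → f3 i k = i + 1 := by
    intro i a b
    simp [h3, a, b, hk]
  have N3 : ∀ i j, ¬(1 ≤ i ∧ i ≤ 2 ∧ 1 ≤ j ∧ j ≤ k) → f3 i j = 0 := by
    intro i j h; simp only [h3]; rw [if_neg h]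
  have V4gen : ∀ i j, 1 ≤ i → i ≤ 2 → 1 ≤ j → j ≤ k → j ≠ k → f4 i j = i := by
    intro i j a b c d e
    simp only [h4]
    rw [if_pos ⟨a, b, c, d⟩, if_neg e]
  have V4k : ∀ i, 1 ≤ i → i ≤ 2 → f4 i k = 3 := by
    intro i a b
    simp [h4, a, b, hk]
  have N4 : ∀ i j, ¬(1 ≤ i ∧ i ≤ 2 ∧ 1 ≤ j ∧ j ≤ k) → f4 i j = 0 := by
    intro i j h; simp only [h4]; rw [if_neg h]
  constructor
  · -- the set of tableaux is exactly {f1, f2, f3, f4}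
    ext f
    simp only [Set.mem_setOf_eq, Set.mem_insert_iff, Set.mem_singleton_iff]
    constructor
    · rintro ⟨⟨hb, hmono, hcol, hrow⟩, hN⟩
      have hA : ∀ j, 1 ≤ j → j < k → f 1 j = 1 ∧ f 2 j = 2 := by
        intro j hj hjk
        have hb2 := hb 2 j (by omega) le_rfl hj (by omega)
        have hb1 := hb 1 j le_rfl (by omega) hj (by omega)
        have hb2' := hb 2 (j + 1) (by omega) le_rfl (by omega) (by omega)
        have hle : f 2 j ≤ 2 := by
          by_contra hcon
          have := hrow 2 j (by omega) le_rfl hj (by omega) (by omega)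
          omega
        have hm := hmono 1 2 j j le_rfl (by omega) le_rfl hj le_rfl (by omega)
        have hc : f 1 j < f 2 j := hcol 1 j le_rfl (by omega) hj (by omega) (by omega)
        omega
      have build : ∀ g : ℕ → ℕ → ℕ,
          (∀ i j, 1 ≤ i → i ≤ 2 → 1 ≤ j → j < k → g i j = i) →
          g 1 k = f 1 k → g 2 k = f 2 k →
          (∀ i j, ¬(1 ≤ i ∧ i ≤ 2 ∧ 1 ≤ j ∧ j ≤ k) → g i j = 0) → f = g := by
        intro g hg e1k e2k hgN
        funext i j
        by_cases hij : 1 ≤ i ∧ i ≤ 2 ∧ 1 ≤ j ∧ j ≤ k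
        · obtain ⟨a1, a2, a3, a4⟩ := hij
          rcases lt_or_eq_of_le a4 with hlt | rfl
          · rw [hg i j a1 a2 a3 hlt]
            obtain ⟨w1, w2⟩ := hA j a3 hlt
            interval_cases i
            · exact w1
            · exact w2
          · interval_cases i
            · exact e1k.symm
            · exact e2k.symm
        · rw [hN i j hij, hgN i j hij]
      have hb1 := hb 1 k le_rfl (by omega) hk le_rfl
      have hb2 := hb 2 k (by omega) le_rfl hk le_rfl
      have hm := hmono 1 2 k k le_rfl (by omega) le_rfl hk le_rfl le_rfl
      have hcases : (f 1 k = 1 ∧ f 2 k = 2) ∨ (f 1 k = 1 ∧ f 2 k = 3) ∨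
          (f 1 k = 2 ∧ f 2 k = 3) ∨ (f 1 k = 3 ∧ f 2 k = 3) := by
        by_cases hle : f 1 k ≤ 2
        · have hc : f 1 k < f 2 k := hcol 1 k le_rfl (by omega) hk le_rfl hle
          omega
        · omega
      rcases hcases with ⟨w1, w2⟩ | ⟨w1, w2⟩ | ⟨w1, w2⟩ | ⟨w1, w2⟩
      · refine Or.inl (build f1 (fun i j a b c d => V1 i j a b c d.le) ?_ ?_ N1)
        · rw [V1 1 k le_rfl (by omega) hk le_rfl, w1]
        · rw [V1 2 k (by omega) le_rfl hk le_rfl, w2]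
      · refine Or.inr (Or.inl (build f2
          (fun i j a b c d => V2gen i j a b c d.le (by omega)) ?_ ?_ N2))
        · rw [V2gen 1 k le_rfl (by omega) hk le_rfl (by omega), w1]
        · rw [V2k, w2]
      · refine Or.inr (Or.inr (Or.inl (build f3
          (fun i j a b c d => V3gen i j a b c d.le (by omega)) ?_ ?_ N3)))
        · rw [V3k 1 le_rfl (by omega), w1]
        · rw [V3k 2 (by omega) le_rfl, w2]
      · refine Or.inr (Or.inr (Or.inr (build f4
          (fun i j a b c d => V4gen i j a b c d.le (by omega)) ?_ ?_ N4)))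
        · rw [V4k 1 le_rfl (by omega), w1]
        · rw [V4k 2 (by omega) le_rfl, w2]
    · clear hPhi V1 N1 V2gen V2k N2 V3gen V3k N3 V4gen V4k hq hroot ha Phi a q
      rintro (rfl | rfl | rfl | rfl) <;>
        refine ⟨⟨fun i j a b c d => ?_, fun i i' j j' a b c d e g => ?_,
          fun i j a b c d e => ?_, fun i j a b c d e => ?_⟩, fun i j hij => ?_⟩ <;>
        simp only [h1, h2, h3, h4] at * <;>
        split_ifs at * <;> omega
  · -- the q-character computation
    have hmem2 : ((2 : ℕ), k) ∈ Finset.Icc 1 2 ×ˢ Finset.Icc 1 k := by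
      simp only [Finset.mem_product, Finset.mem_Icc]
      omega
    have hmem1 : ((1 : ℕ), k) ∈ (Finset.Icc 1 2 ×ˢ Finset.Icc 1 k).erase ((2 : ℕ), k) := by
      simp only [Finset.mem_erase, Finset.mem_product, Finset.mem_Icc, ne_eq, Prod.mk.injEq]
      omega
    have key : ∀ (f : ℕ → ℕ → ℕ) (c : FreeAbelianGroup (ℕ × ℂ)),
        (∀ i j, 1 ≤ i → i ≤ 2 → 1 ≤ j → j < k → f i j = i) →
        (FreeAbelianGroup.of (f 1 k, a * q ^ (2 * (k : ℤ) + 2 * ((1 : ℤ) - (k : ℤ)) - 1))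
            - FreeAbelianGroup.of (1, a * q ^ (2 * (k : ℤ) + 2 * ((1 : ℤ) - (k : ℤ)) - 1)))
          + (FreeAbelianGroup.of (f 2 k, a * q ^ (2 * (k : ℤ) + 2 * ((2 : ℤ) - (k : ℤ)) - 1))
            - FreeAbelianGroup.of (2, a * q ^ (2 * (k : ℤ) + 2 * ((2 : ℤ) - (k : ℤ)) - 1))) = c →
        Phi f = c := by
      intro f c hoff hval
      rw [hPhi, ← Finset.add_sum_erase _ _ hmem2, ← Finset.add_sum_erase _ _ hmem1]
      rw [Finset.sum_eq_zero ?hz, add_zero, ← hval]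
      case hz =>
        rintro ⟨i, j⟩ hp
        rw [Finset.mem_erase, Finset.mem_erase] at hp
        obtain ⟨hne1, hne2, hmem⟩ := hp
        simp only [Finset.mem_product, Finset.mem_Icc] at hmem
        obtain ⟨⟨hi1, hi2⟩, hj1, hj2⟩ := hmem
        have hjk : j < k := by
          rcases lt_or_eq_of_le hj2 with hlt | rfl
          · exact hlt
          · exfalso
            interval_cases i
            · exact hne1 rfl
            · exact hne2 rfl
        rw [hoff i j hi1 hi2 hj1 hjk, sub_self]
      push_cast
      abel
    have e1 : a * q ^ (2 * (k : ℤ) + 2 * ((1 : ℤ) - (k : ℤ)) - 1) = a * q := by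
      rw [show 2 * (k : ℤ) + 2 * ((1 : ℤ) - (k : ℤ)) - 1 = 1 by ring, zpow_one]
    have e3 : a * q ^ (2 * (k : ℤ) + 2 * ((2 : ℤ) - (k : ℤ)) - 1) = a * q ^ (3 : ℕ) := by
      rw [show 2 * (k : ℤ) + 2 * ((2 : ℤ) - (k : ℤ)) - 1 = ((3 : ℕ) : ℤ) by push_cast; ring,
        zpow_natCast]
    have P1 : Phi f1 = 0 := by
      apply key
      · intro i j a b c d; exact V1 i j a b c d.le
      · rw [V1 1 k le_rfl (by omega) hk le_rfl, V1 2 k (by omega) le_rfl hk le_rfl]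
        simp
    have P2 : Phi f2 = -(Agen 2 (a * q ^ (3 : ℕ))) := by
      apply key
      · intro i j a b c d; exact V2gen i j a b c d.le (by omega)
      · rw [V2gen 1 k le_rfl (by omega) hk le_rfl (by omega), V2k, e1, e3]
        simp only [Agen]
        abel
    have P3 : Phi f3 = -(Agen 1 (a * q)) - Agen 2 (a * q ^ (3 : ℕ)) := by
      apply key
      · intro i j a b c d; exact V3gen i j a b c d.le (by omega)
      · rw [V3k 1 le_rfl (by omega), V3k 2 (by omega) le_rfl, e1, e3]
        simp only [Agen]
        abel
    have P4 : Phi f4 = -(Agen 1 (a * q)) - Agen 2 (a * q) - Agen 2 (a * q ^ (3 : ℕ)) := by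
      apply key
      · intro i j a b c d; exact V4gen i j a b c d.le (by omega)
      · rw [V4k 1 le_rfl (by omega), V4k 2 (by omega) le_rfl, e1, e3]
        simp only [Agen]
        abel
    rw [P1, P2, P3, P4]
end

section
/- For gl(1,2) and the one-column Kirillov–Reshetikhin module W_{k,a}^{(2)}, the normalized q-character equals 1 + (1 + [A_{1,aq}]^{-1}) Σ_{l=1}^k Π_{j=1}^l [A_{2,a q^{-2j+1}}]^{-1} in the free abelian group on the symbols [A_{i,x}]^{-1}; this is the sum of the monomials contributed by the 2k+1 tableaux f_i (0 ≤ i ≤ k) and g_j (0 ≤ j ≤ k−1) of the single column of length k; in particular the normalized q-character is multiplicity-free. -/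
/-- coefficient-extraction homomorphism at the symbol `p` -/
noncomputable def KRphi (p : ℕ × ℂ) : FreeAbelianGroup (ℕ × ℂ) →+ ℤ :=
  FreeAbelianGroup.lift (fun x => if x = p then 1 else 0)

lemma KRphi_Agen (p : ℕ × ℂ) (i : ℕ) (x : ℂ) :
    KRphi p (Agen i x) =
      (if ((i, x) : ℕ × ℂ) = p then 1 else 0) - (if ((i + 1, x) : ℕ × ℂ) = p then 1 else 0) := by
  simp [KRphi, Agen]

/-- partial sums of the `A_{2,·}`-roots -/
noncomputable def Sfn (q a : ℂ) (i : ℕ) : FreeAbelianGroup (ℕ × ℂ) :=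
  ∑ j ∈ Finset.Icc 1 i, Agen 2 (a * q ^ (1 - 2 * (j : ℤ)))

lemma KRpt_inj {q a : ℂ} (hq : q ≠ 0) (hroot : ∀ n : ℕ, 0 < n → q ^ n ≠ 1) (ha : a ≠ 0)
    (m n : ℕ)
    (h : a * q ^ (1 - 2 * (m : ℤ)) = a * q ^ (1 - 2 * (n : ℤ))) : m = n := by
  have h' : q ^ (1 - 2 * (m : ℤ)) = q ^ (1 - 2 * (n : ℤ)) := mul_left_cancel₀ ha h
  by_contra hne
  rcases Nat.lt_or_ge m n with hlt | hge
  · have h1 : q ^ ((1 - 2 * (m : ℤ)) - (1 - 2 * (n : ℤ))) = 1 := by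
      rw [zpow_sub₀ hq, h', div_self (zpow_ne_zero _ hq)]
    have h2 : ((1 - 2 * (m : ℤ)) - (1 - 2 * (n : ℤ))) = ((2 * (n - m) : ℕ) : ℤ) := by
      push_cast [Nat.cast_sub hlt.le]; ring
    rw [h2, zpow_natCast] at h1
    exact hroot _ (by omega) h1
  · have hlt : n < m := lt_of_le_of_ne hge (Ne.symm hne)
    have h1 : q ^ ((1 - 2 * (n : ℤ)) - (1 - 2 * (m : ℤ))) = 1 := by
      rw [zpow_sub₀ hq, h'.symm, div_self (zpow_ne_zero _ hq)]
    have h2 : ((1 - 2 * (n : ℤ)) - (1 - 2 * (m : ℤ))) = ((2 * (m - n) : ℕ) : ℤ) := by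
      push_cast [Nat.cast_sub hlt.le]; ring
    rw [h2, zpow_natCast] at h1
    exact hroot _ (by omega) h1

lemma KRphi_Sfn {q a : ℂ} (hq : q ≠ 0) (hroot : ∀ n : ℕ, 0 < n → q ^ n ≠ 1) (ha : a ≠ 0)
    (t i : ℕ) :
    KRphi (2, a * q ^ (1 - 2 * (t : ℤ))) (Sfn q a i) =
      if t ∈ Finset.Icc 1 i then 1 else 0 := by
  rw [Sfn, map_sum]
  have key : ∀ j ∈ Finset.Icc 1 i,
      KRphi (2, a * q ^ (1 - 2 * (t : ℤ))) (Agen 2 (a * q ^ (1 - 2 * (j : ℤ)))) =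
        if j = t then 1 else 0 := by
    intro j _
    rw [KRphi_Agen]
    rw [if_neg (show ¬(((2 + 1 : ℕ), a * q ^ (1 - 2 * (j : ℤ))) : ℕ × ℂ) =
        (2, a * q ^ (1 - 2 * (t : ℤ))) by simp [Prod.ext_iff]), sub_zero]
    by_cases hjt : j = t
    · subst hjt; rw [if_pos rfl, if_pos rfl]
    · rw [if_neg (fun h => hjt (KRpt_inj hq hroot ha j t
        (by simpa [Prod.ext_iff] using h))), if_neg hjt]
  rw [Finset.sum_congr rfl key, Finset.sum_ite_eq' (Finset.Icc 1 i) t (fun _ => (1 : ℤ))]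

lemma KRphi_Sfn_one (q a : ℂ) (i : ℕ) : KRphi (1, a * q) (Sfn q a i) = 0 := by
  rw [Sfn, map_sum]
  refine Finset.sum_eq_zero fun j _ => ?_
  rw [KRphi_Agen, if_neg (by simp [Prod.ext_iff]), if_neg (by simp [Prod.ext_iff]), sub_zero]

lemma KRphi_A1 (q a : ℂ) : KRphi (1, a * q) (Agen 1 (a * q)) = 1 := by
  rw [KRphi_Agen, if_pos rfl, if_neg (by simp [Prod.ext_iff]), sub_zero]

lemma Sfn_inj {q a : ℂ} (hq : q ≠ 0) (hroot : ∀ n : ℕ, 0 < n → q ^ n ≠ 1) (ha : a ≠ 0)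
    (i i' : ℕ) (h : Sfn q a i = Sfn q a i') : i = i' := by
  by_contra hne
  have key : ∀ m m' : ℕ, m < m' → Sfn q a m ≠ Sfn q a m' := by
    intro m m' hlt heq
    have hc := congrArg (KRphi (2, a * q ^ (1 - 2 * (m' : ℤ)))) heq
    rw [KRphi_Sfn hq hroot ha, KRphi_Sfn hq hroot ha] at hc
    rw [if_neg (by simp; omega), if_pos (by simp; omega)] at hc
    exact absurd hc (by norm_num)
  rcases Nat.lt_or_ge i i' with hlt | hge
  · exact key i i' hlt h
  · exact key i' i (lt_of_le_of_ne hge (Ne.symm hne)) h.symm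

lemma f_ne_g (q a : ℂ) (i i' : ℕ) :
    -(Sfn q a i) ≠ -(Agen 1 (a * q)) - Sfn q a i' := by
  intro h
  have hc := congrArg (KRphi (1, a * q)) h
  rw [map_neg, map_sub, map_neg, KRphi_Sfn_one, KRphi_Sfn_one, KRphi_A1] at hc
  norm_num at hc

/-- for gl(1,2), the normalized q-character of `W^{(2)}_{k,a}` — the
sum of the `2k+1` monomials attached to the column tableaux `f_i` (`0 ≤ i ≤ k`,
monomial `Π_{j=1}^{i}[A_{2,aq^{-2j+1}}]⁻¹`) and `g_j` (`0 ≤ j ≤ k−1`, monomial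
`[A_{1,aq}]⁻¹ Π_{j'=1}^{j+1}[A_{2,aq^{-2j'+1}}]⁻¹`) — equals
`1 + (1 + [A_{1,aq}]⁻¹) Σ_{l=1}^k Π_{j=1}^l [A_{2,aq^{-2j+1}}]⁻¹`, and it is
multiplicity-free. -/
theorem gl12_KR_qchar (q a : ℂ) (hq : q ≠ 0)
    (hroot : ∀ n : ℕ, 0 < n → q ^ n ≠ 1) (ha : a ≠ 0) (k : ℕ) (hk : 1 ≤ k)
    (chi : AddMonoidAlgebra ℤ (FreeAbelianGroup (ℕ × ℂ)))
    (hchi : chi =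
      (∑ i ∈ Finset.range (k + 1), AddMonoidAlgebra.single
        (-(∑ j ∈ Finset.Icc 1 i, Agen 2 (a * q ^ (1 - 2 * (j : ℤ))))) (1 : ℤ))
      + ∑ jj ∈ Finset.range k, AddMonoidAlgebra.single
        (-(Agen 1 (a * q))
          - ∑ j ∈ Finset.Icc 1 (jj + 1), Agen 2 (a * q ^ (1 - 2 * (j : ℤ)))) 1) :
    chi = 1 + (1 + AddMonoidAlgebra.single (-(Agen 1 (a * q))) 1) *
        ∑ l ∈ Finset.Icc 1 k, AddMonoidAlgebra.single
          (-(∑ j ∈ Finset.Icc 1 l, Agen 2 (a * q ^ (1 - 2 * (j : ℤ))))) 1 ∧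
      ∀ g, chi.coeff g = 0 ∨ chi.coeff g = 1 := by
  classical
  have hchi' : chi =
      (∑ i ∈ Finset.range (k + 1), AddMonoidAlgebra.single (-(Sfn q a i)) (1 : ℤ))
      + ∑ jj ∈ Finset.range k, AddMonoidAlgebra.single
        (-(Agen 1 (a * q)) - Sfn q a (jj + 1)) 1 := hchi
  constructor
  · rw [hchi']
    show _ = 1 + (1 + AddMonoidAlgebra.single (-(Agen 1 (a * q))) 1) *
        ∑ l ∈ Finset.Icc 1 k, AddMonoidAlgebra.single (-(Sfn q a l)) (1 : ℤ)
    have hIcc : ∀ F : ℕ → AddMonoidAlgebra ℤ (FreeAbelianGroup (ℕ × ℂ)),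
        ∑ l ∈ Finset.Icc 1 k, F l = ∑ i ∈ Finset.range k, F (i + 1) := by
      intro F
      rw [← Finset.Ico_add_one_right_eq_Icc, Finset.sum_Ico_eq_sum_range]
      simp [add_comm]
    rw [hIcc, Finset.sum_range_succ']
    have hS0 : Sfn q a 0 = 0 := by simp [Sfn]
    rw [hS0, neg_zero, add_mul, one_mul, Finset.mul_sum]
    have hB : ∀ i ∈ Finset.range k,
        AddMonoidAlgebra.single (-(Agen 1 (a * q))) (1 : ℤ) *
          AddMonoidAlgebra.single (-(Sfn q a (i + 1))) 1 =
        AddMonoidAlgebra.single (-(Agen 1 (a * q)) - Sfn q a (i + 1)) 1 := by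
      intro i _
      rw [AddMonoidAlgebra.single_mul_single, one_mul, sub_eq_add_neg]
    rw [Finset.sum_congr rfl hB, ← AddMonoidAlgebra.one_def]
    ring
  · intro g
    rw [hchi', AddMonoidAlgebra.coeff_add, Finsupp.add_apply, AddMonoidAlgebra.coeff_sum,
      AddMonoidAlgebra.coeff_sum, Finset.sum_apply', Finset.sum_apply']
    simp only [AddMonoidAlgebra.coeff_single, Finsupp.single_apply]
    have hc1 : (∑ i ∈ Finset.range (k + 1), if -(Sfn q a i) = g then (1 : ℤ) else 0) = 0 ∨
        ((∑ i ∈ Finset.range (k + 1), if -(Sfn q a i) = g then (1 : ℤ) else 0) = 1 ∧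
          ∃ i : ℕ, -(Sfn q a i) = g) := by
      by_cases hg : ∃ i ∈ Finset.range (k + 1), -(Sfn q a i) = g
      · obtain ⟨i0, hi0m, hi0⟩ := hg
        right
        refine ⟨?_, i0, hi0⟩
        have hiff : ∀ i : ℕ, (-(Sfn q a i) = g) ↔ i = i0 := by
          intro i
          constructor
          · intro h
            exact Sfn_inj hq hroot ha i i0 (neg_injective (h.trans hi0.symm))
          · rintro rfl; exact hi0
        calc (∑ i ∈ Finset.range (k + 1), if -(Sfn q a i) = g then (1 : ℤ) else 0)
            = ∑ i ∈ Finset.range (k + 1), if i = i0 then (1 : ℤ) else 0 :=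
              Finset.sum_congr rfl fun i _ => by simp only [hiff i]
          _ = 1 := by
              rw [Finset.sum_ite_eq' (Finset.range (k + 1)) i0 (fun _ => (1 : ℤ)), if_pos hi0m]
      · left
        refine Finset.sum_eq_zero fun i hi => if_neg fun h => hg ⟨i, hi, h⟩
    have hc2 : (∑ jj ∈ Finset.range k,
          if -(Agen 1 (a * q)) - Sfn q a (jj + 1) = g then (1 : ℤ) else 0) = 0 ∨
        ((∑ jj ∈ Finset.range k,
          if -(Agen 1 (a * q)) - Sfn q a (jj + 1) = g then (1 : ℤ) else 0) = 1 ∧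
          ∃ jj : ℕ, -(Agen 1 (a * q)) - Sfn q a (jj + 1) = g) := by
      by_cases hg : ∃ jj ∈ Finset.range k, -(Agen 1 (a * q)) - Sfn q a (jj + 1) = g
      · obtain ⟨j0, hj0m, hj0⟩ := hg
        right
        refine ⟨?_, j0, hj0⟩
        have hiff : ∀ jj : ℕ, (-(Agen 1 (a * q)) - Sfn q a (jj + 1) = g) ↔ jj = j0 := by
          intro jj
          constructor
          · intro h
            have hS : Sfn q a (jj + 1) = Sfn q a (j0 + 1) :=
              sub_right_injective (h.trans hj0.symm)
            have := Sfn_inj hq hroot ha _ _ hS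
            omega
          · rintro rfl; exact hj0
        calc (∑ jj ∈ Finset.range k,
              if -(Agen 1 (a * q)) - Sfn q a (jj + 1) = g then (1 : ℤ) else 0)
            = ∑ jj ∈ Finset.range k, if jj = j0 then (1 : ℤ) else 0 :=
              Finset.sum_congr rfl fun jj _ => by simp only [hiff jj]
          _ = 1 := by
              rw [Finset.sum_ite_eq' (Finset.range k) j0 (fun _ => (1 : ℤ)), if_pos hj0m]
      · left
        refine Finset.sum_eq_zero fun jj hjj => if_neg fun h => hg ⟨jj, hjj, h⟩
    rcases hc1 with h1 | ⟨h1, i1, hi1⟩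
    · rcases hc2 with h2 | ⟨h2, _, _⟩
      · left; rw [h1, h2]; ring
      · right; rw [h1, h2]; ring
    · rcases hc2 with h2 | ⟨h2, j2, hj2⟩
      · right; rw [h1, h2]; ring
      · exact absurd (hi1.trans hj2.symm) (f_ne_g q a i1 (j2 + 1))
end
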